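/- arXiv:2010.07263 — 7 statements merged into one kernel-verified Lean document; each statement's English description precedes it below -/
import Mathlib

section
/- If μ ∈ D[l,r] (a probability measure on [l,r] which is a mixture of δ_l and an absolutely continuous measure with nonincreasing density on [l,r]), then for every segment [a,b] ⊂ (l,+∞) one has μ([a,b]) ≤ (b−a)/(a−l). -/
open MeasureTheory

/-- `μ ∈ D[l,r]`: `μ = α·δ_l + ρ(x)dx` where `ρ` is nonnegative, nonincreasing on `[l,r]`
and vanishes outside `[l,r]` (the absolutely continuous part has total mass `1 − α`). -/
def memD (l r : ℝ) (μ : Measure ℝ) : Prop :=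
  ∃ α : ℝ, 0 ≤ α ∧ α ≤ 1 ∧ ∃ ρ : ℝ → ℝ,
    (∀ x, 0 ≤ ρ x) ∧ AntitoneOn ρ (Set.Icc l r) ∧ (∀ x ∉ Set.Icc l r, ρ x = 0) ∧
    μ = (ENNReal.ofReal α) • Measure.dirac l
          + volume.withDensity (fun x => ENNReal.ofReal (ρ x))

/-- `μ ∈ D_AC[l,r]`: `μ = ρ(x)dx` with `ρ` nonnegative, nonincreasing on `[l,r]`, vanishing
outside `[l,r]`. -/
def memDAC (l r : ℝ) (μ : Measure ℝ) : Prop :=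
  ∃ ρ : ℝ → ℝ,
    (∀ x, 0 ≤ ρ x) ∧ AntitoneOn ρ (Set.Icc l r) ∧ (∀ x ∉ Set.Icc l r, ρ x = 0) ∧
    μ = volume.withDensity (fun x => ENNReal.ofReal (ρ x))
open scoped ENNReal

/-- if μ ∈ D[l,r] then μ([a,b]) ≤ (b−a)/(a−l) for every [a,b] ⊂ (l,+∞). -/
theorem stmt4 (l r : ℝ) (μ : Measure ℝ) [IsProbabilityMeasure μ]
    (hμ : memD l r μ) (a b : ℝ) (hla : l < a) (hab : a ≤ b) :
    (μ (Set.Icc a b)).toReal ≤ (b - a) / (a - l) := by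
  obtain ⟨α, hα0, hα1, ρ, hρ0, hanti, hzero, hμeq⟩ := hμ
  have hal : 0 < a - l := by linarith
  have hrhs0 : 0 ≤ (b - a) / (a - l) := div_nonneg (by linarith) hal.le
  set ν := volume.withDensity (fun x => ENNReal.ofReal (ρ x)) with hν
  have hνle : ∀ s : Set ℝ, ν s ≤ μ s := by
    intro s
    rw [hμeq, Measure.add_apply]
    exact le_add_self
  have hν1 : ∀ s : Set ℝ, ν s ≤ 1 := fun s =>
    le_trans (le_trans (hνle s) (measure_mono (Set.subset_univ s))) (by simp)
  have hdirac : ((ENNReal.ofReal α) • Measure.dirac l) (Set.Icc a b) = 0 := by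
    have : l ∉ Set.Icc a b := by simp [Set.mem_Icc]; intro h; linarith
    simp [Measure.dirac_apply, Set.indicator_of_notMem this]
  have hμab : μ (Set.Icc a b) = ν (Set.Icc a b) := by
    rw [hμeq, Measure.add_apply, hdirac, zero_add]
  have hνapply : ∀ (s : Set ℝ), MeasurableSet s →
      ν s = ∫⁻ x in s, ENNReal.ofReal (ρ x) := by
    intro s hs
    rw [hν, withDensity_apply _ hs]
  rcases le_or_gt a r with har | har
  · -- a ≤ r
    have haIcc : a ∈ Set.Icc l r := ⟨hla.le, har⟩
    -- bound on [a,b]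
    have h1 : ν (Set.Icc a b) ≤ ENNReal.ofReal (ρ a) * ENNReal.ofReal (b - a) := by
      rw [hνapply _ measurableSet_Icc]
      calc ∫⁻ x in Set.Icc a b, ENNReal.ofReal (ρ x)
          ≤ ∫⁻ _ in Set.Icc a b, ENNReal.ofReal (ρ a) := by
            refine lintegral_mono_ae ?_
            refine (ae_restrict_iff' measurableSet_Icc).2 (Filter.Eventually.of_forall ?_)
            intro x hx
            rcases le_or_gt x r with hxr | hxr
            · exact ENNReal.ofReal_le_ofReal
                (hanti haIcc ⟨le_trans hla.le hx.1, hxr⟩ hx.1)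
            · rw [hzero x (by simp [Set.mem_Icc]; intro _; linarith)]
              simp
        _ = ENNReal.ofReal (ρ a) * ENNReal.ofReal (b - a) := by
            rw [setLIntegral_const, Real.volume_Icc]
    -- bound on [l,a]
    have h2 : ENNReal.ofReal (ρ a) * ENNReal.ofReal (a - l) ≤ 1 := by
      refine le_trans ?_ (hν1 (Set.Icc l a))
      rw [hνapply _ measurableSet_Icc]
      calc ENNReal.ofReal (ρ a) * ENNReal.ofReal (a - l)
          = ∫⁻ _ in Set.Icc l a, ENNReal.ofReal (ρ a) := by
            rw [setLIntegral_const, Real.volume_Icc]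
        _ ≤ ∫⁻ x in Set.Icc l a, ENNReal.ofReal (ρ x) := by
            refine lintegral_mono_ae ?_
            refine (ae_restrict_iff' measurableSet_Icc).2 (Filter.Eventually.of_forall ?_)
            intro x hx
            exact ENNReal.ofReal_le_ofReal
              (hanti ⟨hx.1, le_trans hx.2 har⟩ haIcc hx.2)
    have hρa : ρ a ≤ 1 / (a - l) := by
      rw [← ENNReal.ofReal_mul (hρ0 a), show (1 : ℝ≥0∞) = ENNReal.ofReal 1 by simp] at h2
      have := (ENNReal.ofReal_le_ofReal_iff zero_le_one).1 h2
      rw [le_div_iff₀ hal]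
      linarith
    have hfin : μ (Set.Icc a b) ≤ ENNReal.ofReal ((b - a) / (a - l)) := by
      rw [hμab]
      refine le_trans h1 ?_
      rw [← ENNReal.ofReal_mul (hρ0 a)]
      refine ENNReal.ofReal_le_ofReal ?_
      have : ρ a * (b - a) ≤ (1 / (a - l)) * (b - a) :=
        mul_le_mul_of_nonneg_right hρa (by linarith)
      calc ρ a * (b - a) ≤ (1 / (a - l)) * (b - a) := this
        _ = (b - a) / (a - l) := by ring
    exact ENNReal.toReal_le_of_le_ofReal hrhs0 hfin
  · -- r < a : ρ vanishes on [a,b]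
    have hzeroab : ν (Set.Icc a b) = 0 := by
      rw [hνapply _ measurableSet_Icc]
      have : ∫⁻ x in Set.Icc a b, ENNReal.ofReal (ρ x)
          = ∫⁻ _ in Set.Icc a b, (0 : ℝ≥0∞) := by
        refine lintegral_congr_ae ?_
        refine (ae_restrict_iff' measurableSet_Icc).2 (Filter.Eventually.of_forall ?_)
        intro x hx
        show ENNReal.ofReal (ρ x) = 0
        rw [hzero x (by simp [Set.mem_Icc]; intro _; linarith [hx.1])]
        simp
      rw [this, lintegral_zero]
    rw [hμab, hzeroab]
    simpa using hrhs0
end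

section
/- Let λ[l,t] denote the normalized Lebesgue measure on [l,t] for t > l and λ[l,l] = δ_l. A probability measure μ is an extreme point of the convex set D[l,r] if and only if μ = λ[l,t] for some t ∈ [l,r]. -/
open MeasureTheory

/-- `λ[l,t]`: normalized Lebesgue measure on `[l,t]` for `l < t`, and `δ_l` for `t = l`. -/
noncomputable def lam (l t : ℝ) : Measure ℝ :=
  if l < t then (ENNReal.ofReal (t - l))⁻¹ • volume.restrict (Set.Icc l t)
  else Measure.dirac l

/-!
If `μ ∈ D[l,r]` is extreme, its atom at `l` and its density `ρ` cannot both be present. When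
`μ = ρ dx`, cutting `ρ` at a level `s`, `ρ = min ρ s + (ρ - s)⁺`, writes `μ` as a sum of two
measures which are multiples of members of `D[l,r]`; extremality makes them proportional, so `ρ`
takes a.e. only the values `0` and one constant `c`, and being antitone it is `c • 𝟙[l,t]`.
Conversely, if `λ[l,t] = α μ₁ + (1 - α) μ₂`, the `μᵢ` have no atom and the combination of their
antitone densities is constant on `(l,t)` and zero on `(t,r)`; a sum of antitone functions is
constant only if each summand is, so both `μᵢ` equal `λ[l,t]`.
-/

open Set ENNReal

section Generic

variable {α : Type*} [MeasurableSpace α] {μ μ₁ μ₂ : Measure α}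

theorem ofReal_smul_withDensity {c : ℝ} (hc : 0 ≤ c) (f : α → ℝ) :
    ENNReal.ofReal c • μ.withDensity (fun x => ENNReal.ofReal (f x)) =
      μ.withDensity fun x => ENNReal.ofReal (c * f x) := by
  rw [← withDensity_smul' _ _ ofReal_ne_top]
  congr 1
  funext x
  simp [ENNReal.ofReal_mul hc]

theorem withDensity_ofReal_indicator {s : Set α} (hs : MeasurableSet s) (c : ℝ) :
    μ.withDensity (fun x => ENNReal.ofReal (s.indicator (fun _ => c) x)) =
      ENNReal.ofReal c • μ.restrict s := by
  have : (fun x => ENNReal.ofReal (s.indicator (fun _ => c) x)) =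
      s.indicator fun _ => ENNReal.ofReal c := by
    funext x
    by_cases hx : x ∈ s <;> simp [hx]
  rw [this, withDensity_indicator hs, withDensity_const]

theorem ae_eq_of_withDensity_ofReal_eq [SigmaFinite μ] {f g : α → ℝ} (hf : Measurable f)
    (hg : Measurable g) (hf₀ : ∀ x, 0 ≤ f x) (hg₀ : ∀ x, 0 ≤ g x)
    (h : μ.withDensity (fun x => ENNReal.ofReal (f x)) =
      μ.withDensity fun x => ENNReal.ofReal (g x)) : f =ᵐ[μ] g := by
  filter_upwards [(withDensity_eq_iff_of_sigmaFinite hf.ennreal_ofReal.aemeasurable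
    hg.ennreal_ofReal.aemeasurable).1 h] with x hx
  exact (ENNReal.ofReal_eq_ofReal_iff (hf₀ x) (hg₀ x)).1 hx

theorem absolutelyContinuous_of_eq_convexCombination {a : ℝ} (ha₀ : 0 < a) (ha₁ : a < 1)
    (h : μ = ENNReal.ofReal a • μ₁ + ENNReal.ofReal (1 - a) • μ₂) : μ₁ ≪ μ ∧ μ₂ ≪ μ := by
  rw [h]
  exact ⟨(Measure.absolutelyContinuous_smul (by simpa using ha₀)).add_right _,
    (Measure.absolutelyContinuous_smul (by simpa using ha₁)).add_right' _⟩

theorem eq_dirac_of_absolutelyContinuous [MeasurableSingletonClass α] [IsProbabilityMeasure μ]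
    {a : α} (h : μ ≪ Measure.dirac a) : μ = Measure.dirac a := by
  have hcompl : μ {a}ᶜ = 0 := h (by simp)
  have hae : ∀ᵐ x ∂μ, x ∈ ({a} : Set α) :=
    (measure_eq_zero_iff_ae_notMem.1 hcompl).mono fun x hx => by simpa using hx
  rw [← Measure.restrict_eq_self_of_ae_mem hae,
    Measure.restrict_singleton, (prob_compl_eq_zero_iff (measurableSet_singleton a)).1 hcompl,
    one_smul]

theorem withDensity_ofReal_ne_zero {f : α → ℝ} {E : Set α} (hf : Measurable f) (hE : μ E ≠ 0)
    (hpos : ∀ x ∈ E, 0 < f x) :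
    μ.withDensity (fun x => ENNReal.ofReal (f x)) ≠ 0 := by
  intro h
  refine hE (measure_mono_null (fun x hx => ?_)
    (ae_iff.1 ((withDensity_eq_zero_iff hf.ennreal_ofReal.aemeasurable).1 h)))
  simpa using hpos x hx

end Generic

theorem AntitoneOn.eq_of_ae_eq_const {f : ℝ → ℝ} {a b c : ℝ} (hf : AntitoneOn f (Ioo a b))
    (h : ∀ᵐ x, x ∈ Ioo a b → f x = c) : ∀ x ∈ Ioo a b, f x = c := by
  have exists_mem : ∀ u v, a ≤ u → u < v → v ≤ b → ∃ y ∈ Ioo u v, f y = c := by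
    intro u v hau huv hvb
    by_contra! hne
    have : volume (Ioo u v) = 0 := measure_eq_zero_iff_ae_notMem.2 <| h.mono fun y hy hyuv =>
      hne y hyuv (hy ⟨hau.trans_lt hyuv.1, hyuv.2.trans_le hvb⟩)
    simp only [Real.volume_Ioo, ofReal_eq_zero, tsub_le_iff_right, zero_add] at this
    exact this.not_gt huv
  intro x hx
  obtain ⟨y, hy, hfy⟩ := exists_mem x b hx.1.le hx.2 le_rfl
  obtain ⟨z, hz, hfz⟩ := exists_mem a x le_rfl hx.1 hx.2.le
  exact le_antisymm (hfz ▸ hf ⟨hz.1, hz.2.trans hx.2⟩ hx hz.2.le)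
    (hfy ▸ hf hx ⟨hx.1.trans hy.1, hy.2⟩ hy.1.le)

theorem eq_zero_or_eq_of_min_eq_mul_max {c s x : ℝ} (hc : 0 < c)
    (h : min x s = c * max (x - s) 0) : x = 0 ∨ x = s + s / c := by
  rcases le_total x s with hxs | hxs
  · rw [min_eq_left hxs, max_eq_right (sub_nonpos.2 hxs), mul_zero] at h
    exact Or.inl h
  · rw [min_eq_right hxs, max_eq_left (sub_nonneg.2 hxs)] at h
    right
    field_simp
    linarith

structure IsDecreasingDensity (l r : ℝ) (ρ : ℝ → ℝ) : Prop where
  nonneg : ∀ x, 0 ≤ ρ x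
  antitoneOn : AntitoneOn ρ (Icc l r)
  eq_zero_of_notMem : ∀ x ∉ Icc l r, ρ x = 0

namespace IsDecreasingDensity

variable {l r : ℝ} {ρ σ : ℝ → ℝ}

theorem measurable (hρ : IsDecreasingDensity l r ρ) : Measurable ρ := by
  refine measurable_of_restrict_of_restrict_compl (measurableSet_Icc (a := l) (b := r)) ?_ ?_
  · exact Antitone.measurable fun x y hxy => hρ.antitoneOn x.2 y.2 hxy
  · have : (Icc l r)ᶜ.domRestrict ρ = fun _ => 0 := funext fun x => hρ.eq_zero_of_notMem x x.2
    exact this ▸ measurable_const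

theorem const_mul (hρ : IsDecreasingDensity l r ρ) {c : ℝ} (hc : 0 ≤ c) :
    IsDecreasingDensity l r fun x => c * ρ x where
  nonneg x := mul_nonneg hc (hρ.nonneg x)
  antitoneOn _ hx _ hy hxy := mul_le_mul_of_nonneg_left (hρ.antitoneOn hx hy hxy) hc
  eq_zero_of_notMem x hx := by simp [hρ.eq_zero_of_notMem x hx]

theorem add (hρ : IsDecreasingDensity l r ρ) (hσ : IsDecreasingDensity l r σ) :
    IsDecreasingDensity l r fun x => ρ x + σ x where
  nonneg x := add_nonneg (hρ.nonneg x) (hσ.nonneg x)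
  antitoneOn _ hx _ hy hxy := add_le_add (hρ.antitoneOn hx hy hxy) (hσ.antitoneOn hx hy hxy)
  eq_zero_of_notMem x hx := by simp [hρ.eq_zero_of_notMem x hx, hσ.eq_zero_of_notMem x hx]

theorem min_const (hρ : IsDecreasingDensity l r ρ) {s : ℝ} (hs : 0 ≤ s) :
    IsDecreasingDensity l r fun x => min (ρ x) s where
  nonneg x := le_min (hρ.nonneg x) hs
  antitoneOn _ hx _ hy hxy := min_le_min_right s (hρ.antitoneOn hx hy hxy)
  eq_zero_of_notMem x hx := by simp [hρ.eq_zero_of_notMem x hx, hs]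

theorem max_sub_const (hρ : IsDecreasingDensity l r ρ) {s : ℝ} (hs : 0 ≤ s) :
    IsDecreasingDensity l r fun x => max (ρ x - s) 0 where
  nonneg _ := le_max_right _ _
  antitoneOn _ hx _ hy hxy := max_le_max_right 0 (sub_le_sub_right (hρ.antitoneOn hx hy hxy) s)
  eq_zero_of_notMem x hx := by simp [hρ.eq_zero_of_notMem x hx, hs]

end IsDecreasingDensity

theorem isDecreasingDensity_indicator {l r t c : ℝ} (hc : 0 ≤ c) (htr : t ≤ r) :
    IsDecreasingDensity l r ((Icc l t).indicator fun _ => c) where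
  nonneg _ := indicator_nonneg (fun _ _ => hc) _
  antitoneOn x hx y hy hxy := by
    by_cases hyt : y ∈ Icc l t
    · have hxt : x ∈ Icc l t := ⟨hx.1, hxy.trans hyt.2⟩
      rw [indicator_of_mem hyt, indicator_of_mem hxt]
    · rw [indicator_of_notMem hyt]
      exact indicator_nonneg (fun _ _ => hc) _
  eq_zero_of_notMem x hx :=
    indicator_of_notMem (fun hxt => hx ⟨hxt.1, hxt.2.trans htr⟩) _

section MemD

variable {l r : ℝ} {ρ : ℝ → ℝ}

theorem memD_withDensity (hρ : IsDecreasingDensity l r ρ) :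
    memD l r (volume.withDensity fun x => ENNReal.ofReal (ρ x)) :=
  ⟨0, le_rfl, zero_le_one, ρ, hρ.nonneg, hρ.antitoneOn, hρ.eq_zero_of_notMem, by simp⟩

theorem memD_smul_withDensity (hρ : IsDecreasingDensity l r ρ) {c : ℝ≥0∞} (hc : c ≠ ∞) :
    memD l r (c • volume.withDensity fun x => ENNReal.ofReal (ρ x)) := by
  rw [← ofReal_toReal hc, ofReal_smul_withDensity toReal_nonneg]
  exact memD_withDensity (hρ.const_mul toReal_nonneg)

theorem memD_dirac : memD l r (Measure.dirac l) :=
  ⟨1, zero_le_one, le_rfl, 0, fun _ => le_rfl, antitoneOn_const, fun _ _ => rfl, by simp⟩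

theorem memD.exists_eq_withDensity {μ : Measure ℝ} (h : memD l r μ) (hl : μ {l} = 0) :
    ∃ ρ, IsDecreasingDensity l r ρ ∧ μ = volume.withDensity fun x => ENNReal.ofReal (ρ x) := by
  obtain ⟨α, -, -, ρ, h₀, hanti, hzero, rfl⟩ := h
  have hα : ENNReal.ofReal α = 0 := by
    simpa [withDensity_absolutelyContinuous _ _ Real.volume_singleton] using hl
  exact ⟨ρ, ⟨h₀, hanti, hzero⟩, by rw [hα, zero_smul, zero_add]⟩

end MemD

section Lam

variable {l r t : ℝ}

theorem lam_eq_withDensity (hlt : l < t) :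
    lam l t = volume.withDensity fun x =>
      ENNReal.ofReal ((Icc l t).indicator (fun _ => (t - l)⁻¹) x) := by
  rw [withDensity_ofReal_indicator measurableSet_Icc, lam, if_pos hlt,
    ofReal_inv_of_pos (sub_pos.2 hlt)]

theorem smul_restrict_Icc_eq_lam (hlt : l < t) {c : ℝ≥0∞}
    [h : IsProbabilityMeasure (c • volume.restrict (Icc l t))] :
    c • volume.restrict (Icc l t) = lam l t := by
  have hc : c * ENNReal.ofReal (t - l) = 1 := by
    have := h.measure_univ
    rwa [Measure.smul_apply, Measure.restrict_apply_univ, Real.volume_Icc, smul_eq_mul] at this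
  rw [lam, if_pos hlt, ENNReal.eq_inv_of_mul_eq_one_left hc]

theorem eq_lam_of_ae_eq_indicator (hlt : l < t) {ρ : ℝ → ℝ} {c : ℝ}
    [hρ : IsProbabilityMeasure (volume.withDensity fun x => ENNReal.ofReal (ρ x))]
    (h : ρ =ᵐ[volume] (Icc l t).indicator fun _ => c) :
    volume.withDensity (fun x => ENNReal.ofReal (ρ x)) = lam l t := by
  have heq : volume.withDensity (fun x => ENNReal.ofReal (ρ x)) =
      ENNReal.ofReal c • volume.restrict (Icc l t) := by
    rw [← withDensity_ofReal_indicator measurableSet_Icc]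
    exact withDensity_congr_ae (h.mono fun x hx => by simp only [hx])
  rw [heq] at hρ ⊢
  exact smul_restrict_Icc_eq_lam hlt

theorem memD_lam (ht : t ∈ Icc l r) : memD l r (lam l t) := by
  rcases ht.1.eq_or_lt with rfl | hlt
  · rw [lam, if_neg (lt_irrefl l)]
    exact memD_dirac
  · rw [lam_eq_withDensity hlt]
    exact memD_withDensity (isDecreasingDensity_indicator (by simp [hlt.le]) ht.2)

end Lam

def IsExtremeInD (l r : ℝ) (μ : Measure ℝ) : Prop :=
  ∀ (μ₁ μ₂ : Measure ℝ), IsProbabilityMeasure μ₁ → IsProbabilityMeasure μ₂ →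
    memD l r μ₁ → memD l r μ₂ → ∀ α : ℝ, 0 < α → α < 1 →
    μ = ENNReal.ofReal α • μ₁ + ENNReal.ofReal (1 - α) • μ₂ → μ₁ = μ₂

namespace IsDecreasingDensity

variable {l r t : ℝ} {ρ : ℝ → ℝ}

theorem eqOn_of_withDensity_eq_lam (hρ : IsDecreasingDensity l r ρ) (hlt : l < t) (htr : t ≤ r)
    (h : volume.withDensity (fun x => ENNReal.ofReal (ρ x)) = lam l t) :
    (∀ x ∈ Ioo l t, ρ x = (t - l)⁻¹) ∧ ∀ x ∈ Ioo t r, ρ x = 0 := by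
  have hae : ρ =ᵐ[volume] (Icc l t).indicator fun _ => (t - l)⁻¹ := by
    refine ae_eq_of_withDensity_ofReal_eq hρ.measurable
      (measurable_const.indicator measurableSet_Icc) hρ.nonneg
      (isDecreasingDensity_indicator (inv_nonneg.2 (sub_pos.2 hlt).le) htr).nonneg ?_
    rw [h, lam_eq_withDensity hlt]
  constructor
  · refine (hρ.antitoneOn.mono fun x hx => ⟨hx.1.le, hx.2.le.trans htr⟩).eq_of_ae_eq_const ?_
    filter_upwards [hae] with x hx hxI
    rw [hx, indicator_of_mem (Ioo_subset_Icc_self hxI)]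
  · refine (hρ.antitoneOn.mono fun x hx => ⟨hlt.le.trans hx.1.le, hx.2.le⟩).eq_of_ae_eq_const ?_
    filter_upwards [hae] with x hx hxI
    rw [hx, indicator_of_notMem fun h => h.2.not_gt hxI.1]

theorem eqOn_of_mul_add_mul {σ : ℝ → ℝ} (hρ : IsDecreasingDensity l r ρ)
    (hσ : IsDecreasingDensity l r σ) (htr : t ≤ r) {a b c : ℝ} (ha : 0 < a) (hb : 0 < b)
    (hin : ∀ x ∈ Ioo l t, a * ρ x + b * σ x = c) (hout : ∀ x ∈ Ioo t r, a * ρ x + b * σ x = 0) :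
    (∀ x ∈ Ioo l t, ∀ y ∈ Ioo l t, ρ x = ρ y) ∧ ∀ x ∈ Ioo t r, ρ x = 0 := by
  have hmem : ∀ x ∈ Ioo l t, x ∈ Icc l r := fun x hx => ⟨hx.1.le, hx.2.le.trans htr⟩
  constructor
  · intro x hx y hy
    wlog hxy : x ≤ y generalizing x y
    · exact (this y hy x hx (le_of_not_ge hxy)).symm
    have hρxy := hρ.antitoneOn (hmem x hx) (hmem y hy) hxy
    have hσxy := hσ.antitoneOn (hmem x hx) (hmem y hy) hxy
    nlinarith [hin x hx, hin y hy]
  · intro x hx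
    nlinarith [hout x hx, hρ.nonneg x, hσ.nonneg x]

theorem withDensity_eq_lam (hρ : IsDecreasingDensity l r ρ) (hlt : l < t)
    [IsProbabilityMeasure (volume.withDensity fun x => ENNReal.ofReal (ρ x))]
    (hconst : ∀ x ∈ Ioo l t, ∀ y ∈ Ioo l t, ρ x = ρ y) (hzero : ∀ x ∈ Ioo t r, ρ x = 0) :
    volume.withDensity (fun x => ENNReal.ofReal (ρ x)) = lam l t := by
  have hm : (l + t) / 2 ∈ Ioo l t := ⟨by linarith, by linarith⟩
  refine eq_lam_of_ae_eq_indicator hlt (c := ρ ((l + t) / 2)) ?_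
  filter_upwards [measure_eq_zero_iff_ae_notMem.1 ((toFinite {l, t, r}).measure_zero volume)]
    with x hx
  simp only [mem_insert_iff, mem_singleton_iff, not_or] at hx
  obtain ⟨hxl, hxt, hxr⟩ := hx
  rcases lt_or_gt_of_ne hxl with hxl | hxl
  · rw [hρ.eq_zero_of_notMem x fun h => h.1.not_gt hxl,
      indicator_of_notMem fun h => h.1.not_gt hxl]
  rcases lt_or_gt_of_ne hxt with hxt | hxt
  · rw [indicator_of_mem (show x ∈ Icc l t from ⟨hxl.le, hxt.le⟩), hconst x ⟨hxl, hxt⟩ _ hm]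
  rw [indicator_of_notMem fun h => h.2.not_gt hxt]
  rcases lt_or_gt_of_ne hxr with hxr | hxr
  · exact hzero x ⟨hxt, hxr⟩
  · exact hρ.eq_zero_of_notMem x fun h => h.2.not_gt hxr

end IsDecreasingDensity

section Extreme

variable {l r t : ℝ}

theorem isExtremeInD_dirac : IsExtremeInD l r (Measure.dirac l) := by
  intro μ₁ μ₂ _ _ _ _ α hα₀ hα₁ h
  obtain ⟨hac₁, hac₂⟩ := absolutelyContinuous_of_eq_convexCombination hα₀ hα₁ h
  rw [eq_dirac_of_absolutelyContinuous hac₁, eq_dirac_of_absolutelyContinuous hac₂]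

theorem isExtremeInD_lam_of_lt (hlt : l < t) (htr : t ≤ r) : IsExtremeInD l r (lam l t) := by
  intro μ₁ μ₂ _ _ hD₁ hD₂ α hα₀ hα₁ h
  obtain ⟨hac₁, hac₂⟩ := absolutelyContinuous_of_eq_convexCombination hα₀ hα₁ h
  have hlam : lam l t ≪ volume := lam_eq_withDensity hlt ▸ withDensity_absolutelyContinuous _ _
  obtain ⟨ρ₁, hρ₁, rfl⟩ := hD₁.exists_eq_withDensity ((hac₁.trans hlam) Real.volume_singleton)
  obtain ⟨ρ₂, hρ₂, rfl⟩ := hD₂.exists_eq_withDensity ((hac₂.trans hlam) Real.volume_singleton)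
  have hβ : 0 < 1 - α := sub_pos.2 hα₁
  have hρ₁' := hρ₁.const_mul hα₀.le
  have hρ₂' := hρ₂.const_mul hβ.le
  have hsum : volume.withDensity (fun x => ENNReal.ofReal (α * ρ₁ x + (1 - α) * ρ₂ x)) =
      lam l t := by
    rw [h, ofReal_smul_withDensity hα₀.le, ofReal_smul_withDensity hβ.le,
      ← withDensity_add_left hρ₁'.measurable.ennreal_ofReal]
    congr 1
    funext x
    exact ofReal_add (hρ₁'.nonneg x) (hρ₂'.nonneg x)
  obtain ⟨hin, hout⟩ := (hρ₁'.add hρ₂').eqOn_of_withDensity_eq_lam hlt htr hsum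
  obtain ⟨hconst₁, hzero₁⟩ := hρ₁.eqOn_of_mul_add_mul hρ₂ htr hα₀ hβ hin hout
  obtain ⟨hconst₂, hzero₂⟩ := hρ₂.eqOn_of_mul_add_mul hρ₁ htr hβ hα₀
    (by simpa only [add_comm] using hin) (by simpa only [add_comm] using hout)
  rw [hρ₁.withDensity_eq_lam hlt hconst₁ hzero₁, hρ₂.withDensity_eq_lam hlt hconst₂ hzero₂]

theorem isExtremeInD_lam (ht : t ∈ Icc l r) : IsExtremeInD l r (lam l t) := by
  rcases ht.1.eq_or_lt with rfl | hlt
  · rw [lam, if_neg (lt_irrefl l)]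
    exact isExtremeInD_dirac
  · exact isExtremeInD_lam_of_lt hlt ht.2

end Extreme

theorem IsExtremeInD.exists_eq_smul_of_eq_add {l r : ℝ} {μ W₁ W₂ : Measure ℝ}
    [IsProbabilityMeasure μ] (hext : IsExtremeInD l r μ) (hμ : μ = W₁ + W₂) (hW₁ : W₁ ≠ 0)
    (hW₂ : W₂ ≠ 0) (hD₁ : memD l r ((W₁ univ)⁻¹ • W₁)) (hD₂ : memD l r ((W₂ univ)⁻¹ • W₂)) :
    ∃ c : ℝ, 0 < c ∧ W₁ = ENNReal.ofReal c • W₂ := by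
  have hsum : W₁ univ + W₂ univ = 1 := by
    rw [← Measure.add_apply, ← hμ, measure_univ]
  have hW₁top : W₁ univ ≠ ∞ := ne_top_of_le_ne_top one_ne_top (hsum ▸ le_self_add)
  have hW₂top : W₂ univ ≠ ∞ := ne_top_of_le_ne_top one_ne_top (hsum ▸ le_add_self)
  have : IsFiniteMeasure W₁ := ⟨hW₁top.lt_top⟩
  have : IsFiniteMeasure W₂ := ⟨hW₂top.lt_top⟩
  have : NeZero W₁ := ⟨hW₁⟩
  have : NeZero W₂ := ⟨hW₂⟩
  have hW₁ne := Measure.measure_univ_ne_zero.2 hW₁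
  have hW₂ne := Measure.measure_univ_ne_zero.2 hW₂
  have hcompl : ENNReal.ofReal (1 - (W₁ univ).toReal) = W₂ univ := by
    rw [ENNReal.ofReal_sub _ toReal_nonneg, ofReal_one, ofReal_toReal hW₁top,
      ENNReal.sub_eq_of_eq_add hW₁top (by rw [add_comm, hsum])]
  have hnorm : (W₁ univ)⁻¹ • W₁ = (W₂ univ)⁻¹ • W₂ := by
    refine hext _ _ inferInstance inferInstance hD₁ hD₂ (W₁ univ).toReal
      (toReal_pos hW₁ne hW₁top) ?_ ?_
    · exact sub_pos.1 (ENNReal.ofReal_pos.1 (hcompl ▸ pos_iff_ne_zero.2 hW₂ne))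
    · rw [ofReal_toReal hW₁top, hcompl, smul_smul, smul_smul,
        ENNReal.mul_inv_cancel hW₁ne hW₁top, ENNReal.mul_inv_cancel hW₂ne hW₂top, one_smul,
        one_smul, hμ]
  have hdiv : W₁ univ / W₂ univ ≠ ∞ := ENNReal.div_ne_top hW₁top hW₂ne
  refine ⟨(W₁ univ / W₂ univ).toReal,
    toReal_pos (ENNReal.div_ne_zero.2 ⟨hW₁ne, hW₂top⟩) hdiv, ?_⟩
  rw [ofReal_toReal hdiv, div_eq_mul_inv, mul_smul, ← hnorm, smul_smul,
    ENNReal.mul_inv_cancel hW₁ne hW₁top, one_smul]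

namespace IsDecreasingDensity

variable {l r : ℝ} {ρ : ℝ → ℝ}

theorem exists_pos (hρ : IsDecreasingDensity l r ρ)
    (hne : volume.withDensity (fun x => ENNReal.ofReal (ρ x)) ≠ 0) : ∃ x ∈ Ioc l r, 0 < ρ x := by
  by_contra! h
  refine hne ((withDensity_congr_ae ?_).trans withDensity_zero)
  filter_upwards [measure_eq_zero_iff_ae_notMem.1 (Real.volume_singleton (a := l))] with x hx
  by_cases hxI : x ∈ Icc l r
  · simpa using h x ⟨lt_of_le_of_ne hxI.1 (Ne.symm hx), hxI.2⟩
  · simp [hρ.eq_zero_of_notMem x hxI]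

theorem exists_superlevel_ae_eq_Icc (hρ : IsDecreasingDensity l r ρ) {s : ℝ} (hs : 0 ≤ s)
    (hne : {x | s < ρ x}.Nonempty) : ∃ t ∈ Icc l r, {x | s < ρ x} =ᵐ[volume] Icc l t := by
  set E := {x | s < ρ x}
  have hEI : E ⊆ Icc l r := fun x hx => by
    by_contra hxI
    exact (hs.trans_lt hx).ne' (hρ.eq_zero_of_notMem x hxI)
  have hbdd : BddAbove E := bddAbove_Icc.mono hEI
  obtain ⟨x₀, hx₀⟩ := hne
  refine ⟨sSup E,
    ⟨(hEI hx₀).1.trans (le_csSup hbdd hx₀), csSup_le ⟨x₀, hx₀⟩ fun x hx => (hEI hx).2⟩,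
    ae_eq_set.2 ⟨?_, ?_⟩⟩
  · have hEt : E ⊆ Icc l (sSup E) := fun x hx => ⟨(hEI hx).1, le_csSup hbdd hx⟩
    rw [sdiff_eq_empty.2 hEt, measure_empty]
  · refine measure_mono_null (fun x hx => ?_) (Real.volume_singleton (a := sSup E))
    by_contra hxt
    obtain ⟨y, hy, hxy⟩ := exists_lt_of_lt_csSup ⟨x₀, hx₀⟩ (lt_of_le_of_ne hx.1.2 hxt)
    exact hx.2 (hy.trans_le (hρ.antitoneOn ⟨hx.1.1, hxy.le.trans (hEI hy).2⟩ (hEI hy) hxy.le))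

theorem ae_eq_indicator_of_isExtremeInD (hρ : IsDecreasingDensity l r ρ)
    [IsProbabilityMeasure (volume.withDensity fun x => ENNReal.ofReal (ρ x))]
    (hext : IsExtremeInD l r (volume.withDensity fun x => ENNReal.ofReal (ρ x))) {s : ℝ}
    (hs : 0 < s) (hE : volume {x | s < ρ x} ≠ 0) :
    ∃ c, ρ =ᵐ[volume] {x | s < ρ x}.indicator fun _ => c := by
  have hρ₁ := hρ.min_const hs.le
  have hρ₂ := hρ.max_sub_const hs.le
  have hsplit : volume.withDensity (fun x => ENNReal.ofReal (ρ x)) =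
      volume.withDensity (fun x => ENNReal.ofReal (min (ρ x) s)) +
        volume.withDensity fun x => ENNReal.ofReal (max (ρ x - s) 0) := by
    rw [← withDensity_add_left hρ₁.measurable.ennreal_ofReal]
    congr 1
    funext x
    rw [Pi.add_apply, ← ofReal_add (hρ₁.nonneg x) (hρ₂.nonneg x)]
    rcases le_total (ρ x) s with h | h <;> simp [h]
  have hW₁ := withDensity_ofReal_ne_zero hρ₁.measurable hE fun x hx => lt_min (hs.trans hx) hs
  have hW₂ := withDensity_ofReal_ne_zero hρ₂.measurable hE fun x hx =>
    lt_max_of_lt_left (sub_pos.2 hx)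
  obtain ⟨c, hc, hW⟩ := hext.exists_eq_smul_of_eq_add hsplit hW₁ hW₂
    (memD_smul_withDensity hρ₁ (inv_ne_top.2 (Measure.measure_univ_ne_zero.2 hW₁)))
    (memD_smul_withDensity hρ₂ (inv_ne_top.2 (Measure.measure_univ_ne_zero.2 hW₂)))
  rw [ofReal_smul_withDensity hc.le] at hW
  have hρ₂c := hρ₂.const_mul hc.le
  refine ⟨s + s / c, ?_⟩
  filter_upwards [ae_eq_of_withDensity_ofReal_eq hρ₁.measurable hρ₂c.measurable hρ₁.nonneg
    hρ₂c.nonneg hW] with x hx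
  rcases eq_zero_or_eq_of_min_eq_mul_max hc hx with h | h
  · rw [indicator_of_notMem (by simp [h, hs.le]), h]
  · have hx : x ∈ {x | s < ρ x} := by
      rw [mem_ofPred_eq, h]
      exact lt_add_of_pos_right s (div_pos hs hc)
    rw [indicator_of_mem hx, h]

theorem eq_lam_of_isExtremeInD (hρ : IsDecreasingDensity l r ρ)
    [IsProbabilityMeasure (volume.withDensity fun x => ENNReal.ofReal (ρ x))]
    (hext : IsExtremeInD l r (volume.withDensity fun x => ENNReal.ofReal (ρ x))) :
    ∃ t ∈ Icc l r, volume.withDensity (fun x => ENNReal.ofReal (ρ x)) = lam l t := by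
  obtain ⟨x₀, hx₀, hρx₀⟩ := hρ.exists_pos (IsProbabilityMeasure.ne_zero _)
  have hs := half_pos hρx₀
  have hsub : Icc l x₀ ⊆ {x | ρ x₀ / 2 < ρ x} := fun x hx =>
    (half_lt_self hρx₀).trans_le (hρ.antitoneOn ⟨hx.1, hx.2.trans hx₀.2⟩ ⟨hx₀.1.le, hx₀.2⟩ hx.2)
  have hE : volume {x | ρ x₀ / 2 < ρ x} ≠ 0 :=
    ((by simpa using hx₀.1 : 0 < volume (Icc l x₀)).trans_le (measure_mono hsub)).ne'
  obtain ⟨c, hρc⟩ := hρ.ae_eq_indicator_of_isExtremeInD hext hs hE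
  obtain ⟨t, ht, hEt⟩ := hρ.exists_superlevel_ae_eq_Icc hs.le (nonempty_of_measure_ne_zero hE)
  have hIcc : volume (Icc l t) ≠ 0 := measure_congr hEt ▸ hE
  have hlt : l < t := by simpa using hIcc
  exact ⟨t, ht, eq_lam_of_ae_eq_indicator hlt (hρc.trans (indicator_ae_eq_of_ae_eq_set hEt))⟩

theorem not_isExtremeInD_of_atom (hρ : IsDecreasingDensity l r ρ) {α : ℝ} (hα : 0 < α)
    [IsProbabilityMeasure
      (ENNReal.ofReal α • Measure.dirac l + volume.withDensity fun x => ENNReal.ofReal (ρ x))]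
    (hW : volume.withDensity (fun x => ENNReal.ofReal (ρ x)) ≠ 0) :
    ¬IsExtremeInD l r
      (ENNReal.ofReal α • Measure.dirac l + volume.withDensity fun x => ENNReal.ofReal (ρ x)) := by
  intro hext
  have hα' : ENNReal.ofReal α ≠ 0 := by simpa using hα
  have hδ : ENNReal.ofReal α • Measure.dirac l ≠ 0 := by simpa using hα'
  have hD : memD l r (((ENNReal.ofReal α • Measure.dirac l) univ)⁻¹ •
      ENNReal.ofReal α • Measure.dirac l) := by
    rw [Measure.smul_apply, measure_univ, smul_eq_mul, mul_one, smul_smul,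
      ENNReal.inv_mul_cancel hα' ofReal_ne_top, one_smul]
    exact memD_dirac
  obtain ⟨c, -, hc⟩ := hext.exists_eq_smul_of_eq_add rfl hδ hW hD
    (memD_smul_withDensity hρ (inv_ne_top.2 (Measure.measure_univ_ne_zero.2 hW)))
  -- `{l}` carries mass `ofReal α` on the left and none on the right
  have := congrArg (· {l}) hc
  simp [withDensity_absolutelyContinuous _ _ Real.volume_singleton, hα'] at this

end IsDecreasingDensity

theorem eq_lam_of_memD_of_isExtremeInD {l r : ℝ} (hlr : l ≤ r) {μ : Measure ℝ}
    [hμ : IsProbabilityMeasure μ] (hD : memD l r μ) (hext : IsExtremeInD l r μ) :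
    ∃ t ∈ Icc l r, μ = lam l t := by
  obtain ⟨α, hα₀, -, ρ, h₀, hanti, hzero, rfl⟩ := hD
  have hρ : IsDecreasingDensity l r ρ := ⟨h₀, hanti, hzero⟩
  by_cases hW : volume.withDensity (fun x => ENNReal.ofReal (ρ x)) = 0
  · have hα : ENNReal.ofReal α = 1 := by simpa [hW] using hμ.measure_univ
    refine ⟨l, left_mem_Icc.2 hlr, ?_⟩
    rw [hW, hα, add_zero, one_smul, lam, if_neg (lt_irrefl l)]
  rcases hα₀.eq_or_lt with rfl | hα₀
  · simp only [ofReal_zero, zero_smul, zero_add] at hμ hext ⊢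
    exact hρ.eq_lam_of_isExtremeInD hext
  · exact absurd hext (hρ.not_isExtremeInD_of_atom hα₀ hW)

/-- a probability measure μ is an extreme point of D[l,r] iff μ = λ[l,t] for
some t ∈ [l,r]. -/
theorem stmt7 (l r : ℝ) (hlr : l ≤ r) (μ : Measure ℝ) [IsProbabilityMeasure μ] :
    (memD l r μ ∧
      ∀ (μ₁ μ₂ : Measure ℝ), IsProbabilityMeasure μ₁ → IsProbabilityMeasure μ₂ →
        memD l r μ₁ → memD l r μ₂ → ∀ α : ℝ, 0 < α → α < 1 →
        μ = ENNReal.ofReal α • μ₁ + ENNReal.ofReal (1 - α) • μ₂ → μ₁ = μ₂)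
    ↔ ∃ t ∈ Set.Icc l r, μ = lam l t := by
  refine ⟨fun ⟨hD, hext⟩ => eq_lam_of_memD_of_isExtremeInD hlr hD hext, ?_⟩
  rintro ⟨t, ht, rfl⟩
  exact ⟨memD_lam ht, isExtremeInD_lam ht⟩
end

section
/- Define T : C[l,r] → C[l,r] by T(φ)(t) = (1/(t−l))∫_l^t φ(x)dx for t ∈ (l,r] and T(φ)(l) = φ(l). Then T is a bounded linear operator with operator norm at most 1, its image contains C¹[l,r] and is dense in C[l,r], and the dual operator T* maps probability measures on [l,r] to probability measures on [l,r] injectively. -/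
open MeasureTheory Set

/-!
The substitution `x = l + (t - l) u` writes `T φ (t) = ∫₀¹ φ (l + (t - l) u) du`, a formula that
also covers `t = l`. It makes `T φ` continuous with `‖T φ‖ ≤ ‖φ‖`, and by Fubini it shows that
`T* μ` is the image of `μ ⊗ Leb[0,1]` under `(t, u) ↦ l + (t - l) u`, again a probability measure.
For `f ∈ C¹` the function `φ = f + (x - l) f'` satisfies `T φ = f`, because
`d/du [u f (l + (t - l) u)] = φ (l + (t - l) u)`. Polynomials are `C¹`, so by Weierstrass the range
of `T` is dense, and then `T*` is injective since a finite Borel measure on `[l, r]` is determined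
by the integrals of continuous functions.
-/

section ContinuousFunctionsOnCompact

variable {X : Type*} [TopologicalSpace X] [CompactSpace X] [MeasurableSpace X] [BorelSpace X]

theorem ContinuousMap.continuous_integral (μ : Measure X) [IsFiniteMeasure μ] :
    Continuous fun φ : C(X, ℝ) => ∫ x, φ x ∂μ :=
  (MeasureTheory.continuous_integral.comp (ContinuousMap.toLp 1 μ ℝ).continuous).congr fun φ =>
    integral_congr_ae (ContinuousMap.coeFn_toLp μ φ)

theorem MeasureTheory.Measure.ext_of_integral_eq_of_denseRange [HasOuterApproxClosed X]
    {Y : Type*} {T : Y → C(X, ℝ)} (hT : DenseRange T) {μ₁ μ₂ : Measure X}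
    [IsFiniteMeasure μ₁] [IsFiniteMeasure μ₂] (h : ∀ y, ∫ x, T y x ∂μ₁ = ∫ x, T y x ∂μ₂) :
    μ₁ = μ₂ := by
  have hall (ψ : C(X, ℝ)) : ∫ x, ψ x ∂μ₁ = ∫ x, ψ x ∂μ₂ :=
    hT.induction_on ψ (isClosed_eq (ContinuousMap.continuous_integral μ₁)
      (ContinuousMap.continuous_integral μ₂)) h
  exact ext_of_forall_integral_eq_of_IsFiniteMeasure fun f => hall f.toContinuousMap

end ContinuousFunctionsOnCompact

theorem denseRange_of_polynomialFunctions_subset_range {Y : Type*} {a b : ℝ}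
    {T : Y → C(Icc a b, ℝ)} (h : (polynomialFunctions (Icc a b) : Set C(Icc a b, ℝ)) ⊆ range T) :
    DenseRange T := by
  refine Dense.mono h ?_
  rw [dense_iff_closure_eq, ← Subalgebra.topologicalClosure_coe,
    polynomialFunctions_closure_eq_top, Algebra.coe_top]

section CesaroOperator

variable {l r : ℝ}

section

variable (hlr : l ≤ r)

noncomputable def cesaroAverage (φ : C(Icc l r, ℝ)) (t : ℝ) : ℝ :=
  ∫ u in (0 : ℝ)..1, IccExtend hlr φ (l + (t - l) * u)

theorem continuous_IccExtend_affine (φ : C(Icc l r, ℝ)) :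
    Continuous fun p : ℝ × ℝ => IccExtend hlr φ (l + (p.1 - l) * p.2) :=
  φ.continuous.Icc_extend'.comp (by fun_prop)

theorem continuous_cesaroAverage (φ : C(Icc l r, ℝ)) : Continuous (cesaroAverage hlr φ) :=
  intervalIntegral.continuous_parametric_intervalIntegral_of_continuous'
    (f := fun t u => IccExtend hlr φ (l + (t - l) * u)) (continuous_IccExtend_affine hlr φ) 0 1

theorem intervalIntegrable_IccExtend_affine (φ : C(Icc l r, ℝ)) (t : ℝ) :
    IntervalIntegrable (fun u => IccExtend hlr φ (l + (t - l) * u)) volume 0 1 :=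
  ((continuous_IccExtend_affine hlr φ).comp (Continuous.prodMk_right t)).intervalIntegrable 0 1

theorem cesaroAverage_add (φ ψ : C(Icc l r, ℝ)) (t : ℝ) :
    cesaroAverage hlr (φ + ψ) t = cesaroAverage hlr φ t + cesaroAverage hlr ψ t :=
  intervalIntegral.integral_add (intervalIntegrable_IccExtend_affine hlr φ t)
    (intervalIntegrable_IccExtend_affine hlr ψ t)

theorem cesaroAverage_smul (c : ℝ) (φ : C(Icc l r, ℝ)) (t : ℝ) :
    cesaroAverage hlr (c • φ) t = c * cesaroAverage hlr φ t :=
  intervalIntegral.integral_const_mul c _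

theorem abs_cesaroAverage_le (φ : C(Icc l r, ℝ)) (t : ℝ) : |cesaroAverage hlr φ t| ≤ ‖φ‖ := by
  have h := intervalIntegral.norm_integral_le_of_norm_le_const (a := 0) (b := 1)
    (f := fun u => IccExtend hlr φ (l + (t - l) * u)) fun u _ => φ.norm_coe_le_norm _
  rwa [sub_zero, abs_one, mul_one] at h

theorem cesaroAverage_of_lt (φ : C(Icc l r, ℝ)) {t : ℝ} (ht : l < t) :
    cesaroAverage hlr φ t = (∫ x in Icc l t, IccExtend hlr φ x) / (t - l) := by
  rw [cesaroAverage, intervalIntegral.integral_comp_add_mul _ (sub_ne_zero.2 ht.ne'), mul_zero,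
    mul_one, add_zero, add_sub_cancel, intervalIntegral.integral_of_le ht.le,
    ← integral_Icc_eq_integral_Ioc, smul_eq_mul, inv_mul_eq_div]

theorem cesaroAverage_left (φ : C(Icc l r, ℝ)) : cesaroAverage hlr φ l = IccExtend hlr φ l := by
  simp [cesaroAverage]

noncomputable def cesaroOperator : C(Icc l r, ℝ) →L[ℝ] C(Icc l r, ℝ) :=
  LinearMap.mkContinuous
    { toFun := fun φ => ⟨fun t => cesaroAverage hlr φ t,
        (continuous_cesaroAverage hlr φ).comp continuous_subtype_val⟩
      map_add' := fun φ ψ => ContinuousMap.ext fun t => cesaroAverage_add hlr φ ψ t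
      map_smul' := fun c φ => ContinuousMap.ext fun t => cesaroAverage_smul hlr c φ t }
    1 fun φ => by
      rw [one_mul]
      exact (ContinuousMap.norm_le _ (norm_nonneg φ)).2 fun t => abs_cesaroAverage_le hlr φ t

theorem cesaroOperator_apply (φ : C(Icc l r, ℝ)) (t : Icc l r) :
    cesaroOperator hlr φ t = cesaroAverage hlr φ t :=
  rfl

theorem cesaroOperator_apply_left (φ : C(Icc l r, ℝ)) {t : Icc l r} (ht : (t : ℝ) = l) :
    cesaroOperator hlr φ t = φ t := by
  obtain rfl : t = ⟨l, left_mem_Icc.2 hlr⟩ := Subtype.ext ht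
  exact (cesaroAverage_left hlr φ).trans (IccExtend_left hlr φ)

theorem norm_cesaroOperator_le : ‖cesaroOperator hlr‖ ≤ 1 :=
  LinearMap.mkContinuous_norm_le _ zero_le_one _

noncomputable def cesaroDualMeasure (μ : Measure (Icc l r)) : Measure (Icc l r) :=
  (μ.prod (volume.restrict (Ioc (0 : ℝ) 1))).map fun p => projIcc l r hlr (l + (p.1 - l) * p.2)

instance (μ : Measure (Icc l r)) [IsProbabilityMeasure μ] :
    IsProbabilityMeasure (cesaroDualMeasure hlr μ) := by
  have : IsProbabilityMeasure (volume.restrict (Ioc (0 : ℝ) 1)) := ⟨by simp⟩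
  exact Measure.isProbabilityMeasure_map (by fun_prop)

theorem integral_cesaroOperator_apply (μ : Measure (Icc l r)) [IsFiniteMeasure μ]
    (φ : C(Icc l r, ℝ)) :
    ∫ t, cesaroOperator hlr φ t ∂μ = ∫ x, φ x ∂cesaroDualMeasure hlr μ := by
  set k : Icc l r × ℝ → Icc l r := fun p => projIcc l r hlr (l + (p.1 - l) * p.2)
  have hk : Continuous k := continuous_projIcc.comp (by fun_prop)
  have hint : Integrable (fun p => φ (k p)) (μ.prod (volume.restrict (Ioc (0 : ℝ) 1))) :=
    .of_bound (φ.continuous.comp hk).aestronglyMeasurable ‖φ‖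
      (.of_forall fun p => φ.norm_coe_le_norm (k p))
  calc ∫ t, cesaroOperator hlr φ t ∂μ = ∫ t, (∫ u in Ioc (0 : ℝ) 1, φ (k (t, u))) ∂μ := by
        simp only [cesaroOperator_apply, cesaroAverage, intervalIntegral.integral_of_le zero_le_one]
        rfl
    _ = ∫ p, φ (k p) ∂(μ.prod (volume.restrict (Ioc (0 : ℝ) 1))) := (integral_prod _ hint).symm
    _ = ∫ x, φ x ∂cesaroDualMeasure hlr μ :=
        (integral_map hk.aemeasurable φ.continuous.aestronglyMeasurable).symm

end

theorem exists_cesaroAverage_eq_of_contDiffOn (hlr : l < r) {f : ℝ → ℝ}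
    (hf : ContDiffOn ℝ 1 f (Icc l r)) :
    ∃ φ : C(Icc l r, ℝ), ∀ t ∈ Icc l r, cesaroAverage hlr.le φ t = f t := by
  set f' := derivWithin f (Icc l r)
  have hφ : ContinuousOn (fun x => f x + (x - l) * f' x) (Icc l r) :=
    hf.continuousOn.add ((continuousOn_id.sub continuousOn_const).mul
      (hf.continuousOn_derivWithin (uniqueDiffOn_Icc hlr) le_rfl))
  set φ : C(Icc l r, ℝ) := ⟨_, hφ.domRestrict⟩
  refine ⟨φ, fun t ht => ?_⟩
  set g : ℝ → ℝ := fun u => l + (t - l) * u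
  have hg : MapsTo g (Icc 0 1) (Icc l r) := fun u hu => by
    constructor <;> nlinarith [hu.1, hu.2, ht.1, ht.2]
  have hderiv (u) (hu : u ∈ Icc (0 : ℝ) 1) :
      HasDerivWithinAt (fun u => u * f (g u)) (IccExtend hlr.le φ (g u)) (Icc 0 1) u := by
    have hgd : HasDerivAt g (t - l) u :=
      (((hasDerivAt_id u).const_mul (t - l)).const_add l).congr_deriv (mul_one _)
    have hfg : HasDerivWithinAt (f ∘ g) (f' (g u) * (t - l)) (Icc 0 1) u :=
      ((hf.differentiableOn one_ne_zero _ (hg hu)).hasDerivWithinAt).comp u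
        hgd.hasDerivWithinAt hg
    refine ((hasDerivWithinAt_id u _).mul hfg).congr_deriv ?_
    rw [IccExtend_of_mem hlr.le φ (hg hu)]
    simp only [φ, g, ContinuousMap.coe_mk, domRestrict_apply, id, Function.comp_apply]
    ring
  calc cesaroAverage hlr.le φ t = 1 * f (g 1) - 0 * f (g 0) :=
        intervalIntegral.integral_eq_sub_of_hasDerivAt_of_le zero_le_one
          (fun u hu => (hderiv u hu).continuousWithinAt)
          (fun u hu => (hderiv u (Ioo_subset_Icc_self hu)).hasDerivAt (Icc_mem_nhds hu.1 hu.2))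
          (intervalIntegrable_IccExtend_affine hlr.le φ t)
    _ = f t := by simp [g]

end CesaroOperator

/-- the averaging operator `T(φ)(t) = (1/(t−l))∫_l^t φ`, `T(φ)(l) = φ(l)`, is a
bounded linear operator on `C[l,r]` of norm ≤ 1, its image contains `C¹[l,r]` and is dense,
and its dual maps probability measures to probability measures injectively. -/
theorem stmt8 (l r : ℝ) (hlr : l < r) :
    ∃ T : C(Set.Icc l r, ℝ) →L[ℝ] C(Set.Icc l r, ℝ),
      (∀ (φ : C(Set.Icc l r, ℝ)) (t : Set.Icc l r),
          (l < (t : ℝ) →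
            T φ t = (∫ x in Set.Icc l (t : ℝ), Set.IccExtend hlr.le φ x) / ((t : ℝ) - l))
          ∧ ((t : ℝ) = l → T φ t = φ t))
      ∧ ‖T‖ ≤ 1
      ∧ (∀ f : ℝ → ℝ, ContDiffOn ℝ 1 f (Set.Icc l r) →
          ∃ φ : C(Set.Icc l r, ℝ), ∀ t : Set.Icc l r, T φ t = f t)
      ∧ DenseRange (T : C(Set.Icc l r, ℝ) → C(Set.Icc l r, ℝ))
      ∧ (∀ μ : Measure (Set.Icc l r), IsProbabilityMeasure μ →
          ∃ ν : Measure (Set.Icc l r), IsProbabilityMeasure ν ∧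
            ∀ φ : C(Set.Icc l r, ℝ), (∫ t, T φ t ∂μ) = ∫ t, φ t ∂ν)
      ∧ (∀ μ₁ μ₂ : Measure (Set.Icc l r),
          IsProbabilityMeasure μ₁ → IsProbabilityMeasure μ₂ →
          (∀ φ : C(Set.Icc l r, ℝ), (∫ t, T φ t ∂μ₁) = ∫ t, T φ t ∂μ₂) → μ₁ = μ₂) := by
  have hC1 (f : ℝ → ℝ) (hf : ContDiffOn ℝ 1 f (Icc l r)) :
      ∃ φ, ∀ t : Icc l r, cesaroOperator hlr.le φ t = f t := by
    obtain ⟨φ, hφ⟩ := exists_cesaroAverage_eq_of_contDiffOn hlr hf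
    exact ⟨φ, fun t => hφ t t.2⟩
  have hdense : DenseRange (cesaroOperator hlr.le) := by
    refine denseRange_of_polynomialFunctions_subset_range ?_
    rintro _ ⟨p, -, rfl⟩
    obtain ⟨φ, hφ⟩ := hC1 _ ((p.contDiff_aeval 1).contDiffOn (𝕜 := ℝ))
    exact ⟨φ, ContinuousMap.ext fun t => by simpa using hφ t⟩
  refine ⟨cesaroOperator hlr.le,
    fun φ t => ⟨cesaroAverage_of_lt hlr.le φ, cesaroOperator_apply_left hlr.le φ⟩,
    norm_cesaroOperator_le hlr.le, hC1, hdense,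
    fun μ _ => ⟨_, inferInstance, integral_cesaroOperator_apply hlr.le μ⟩,
    fun μ₁ μ₂ _ _ h => Measure.ext_of_integral_eq_of_denseRange hdense h⟩
end

section
/- Let E be a compact metric space, f₁,…,f_n bounded continuous real functions on E, c₁,…,c_n real numbers, and K the set of Borel probability measures μ on E with ∫ f_i dμ = c_i for all i. Then μ ∈ K is an extreme point of K if and only if the support of μ has at most n+1 points, and writing supp(μ) = {x₁,…,x_k}, the vectors (f₁(x_i),…,f_n(x_i),1) ∈ ℝ^{n+1}, 1 ≤ i ≤ k, are linearly independent. -/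
/-!
If `μ` is extreme and `g` is measurable with `|g| ≤ 1`, `∫ g dμ = 0` and `∫ g fᵢ dμ = 0` for all
`i`, then `(1 + g) μ` and `(1 - g) μ` both lie in `K` and `μ` is their midpoint, so `g = 0`
`μ`-a.e. Taking `g` proportional to `∑ⱼ bⱼ 𝟙_{Aⱼ}` for disjoint non-null sets `Aⱼ`, this says that
the vectors `(∫_{Aⱼ} f₁ dμ, …, ∫_{Aⱼ} fₙ dμ, μ(Aⱼ))` are linearly independent in `ℝⁿ⁺¹`. Hence the
support of `μ` has at most `n + 1` points (separate them by disjoint open sets), they are atoms,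
and for `Aⱼ` the atoms these vectors are the `μ{xⱼ} • (f(xⱼ), 1)`.

Conversely, if `μ` is carried by a finite set `s` on which the vectors `(f(x), 1)` are
independent, then any `μ₁, μ₂ ∈ K` with `μ` as a proper convex combination are carried by `s`
too, and their weights solve the same system `∑ₓ wₓ (f(x), 1) = (c, 1)`, so they agree.
-/

open MeasureTheory Set Function
open scoped Topology

section MomentProblem

variable {E ι : Type*} [MeasurableSpace E]

def momentSet (f : ι → E → ℝ) (c : ι → ℝ) : Set (Measure E) :=
  {ν | IsProbabilityMeasure ν ∧ ∀ i, ∫ x, f i x ∂ν = c i}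

/-- Measures form only an `ℝ≥0∞`-cone, so convex combinations carry `ENNReal.ofReal` weights. -/
def IsExtremeMeasure (K : Set (Measure E)) (μ : Measure E) : Prop :=
  ∀ μ₁ ∈ K, ∀ μ₂ ∈ K, ∀ α : ℝ, 0 < α → α < 1 →
    μ = ENNReal.ofReal α • μ₁ + ENNReal.ofReal (1 - α) • μ₂ → μ₁ = μ₂

def momentVector {n : ℕ} (f : Fin n → E → ℝ) (x : E) : Fin (n + 1) → ℝ :=
  Fin.snoc (fun i => f i x) 1

theorem integrable_momentVector {n : ℕ} {f : Fin n → E → ℝ} {μ : Measure E} [IsFiniteMeasure μ]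
    (hf : ∀ i, Integrable (f i) μ) (k : Fin (n + 1)) :
    Integrable (fun x => momentVector f x k) μ := by
  induction k using Fin.lastCases <;> simp [momentVector, hf]

theorem measure_eq_zero_of_eq_smul_add_smul {μ μ₁ μ₂ : Measure E} {α : ℝ} (hα₀ : 0 < α)
    (hα₁ : α < 1) (h : μ = ENNReal.ofReal α • μ₁ + ENNReal.ofReal (1 - α) • μ₂) {A : Set E}
    (hA : μ A = 0) : μ₁ A = 0 ∧ μ₂ A = 0 := by
  simpa [h, not_le.2 hα₀, not_le.2 hα₁] using hA

section Atomic

variable [MeasurableSingletonClass E]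

theorem MeasureTheory.Measure.ext_of_compl_finset_null {ν₁ ν₂ : Measure E} (s : Finset E)
    (h₁ : ν₁ (↑s)ᶜ = 0) (h₂ : ν₂ (↑s)ᶜ = 0) (h : ∀ x ∈ s, ν₁ {x} = ν₂ {x}) : ν₁ = ν₂ := by
  classical
  ext A hA
  have hsum : ∀ ν : Measure E, ν (↑s)ᶜ = 0 → ν A = ∑ x ∈ s with x ∈ A, ν {x} := by
    intro ν hν
    rw [sum_measure_singleton, Finset.coe_filter, ← measure_inter_conull hν]
    congr 1
    ext x
    simp [and_comm]
  rw [hsum ν₁ h₁, hsum ν₂ h₂]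
  exact Finset.sum_congr rfl fun x hx => h x (Finset.mem_filter.1 hx).1

theorem integral_eq_sum_of_compl_finset_null {ν : Measure E} [IsFiniteMeasure ν] (s : Finset E)
    (hs : ν (↑s)ᶜ = 0) (g : E → ℝ) : ∫ x, g x ∂ν = ∑ x ∈ s, ν.real {x} * g x := by
  rw [← Measure.restrict_eq_self_of_ae_mem (ae_iff.2 hs), setIntegral_finset s IntegrableOn.finset]
  simp [Measure.restrict_eq_self_of_ae_mem (ae_iff.2 hs)]

theorem sum_measureReal_smul_momentVector {n : ℕ} {f : Fin n → E → ℝ} {c : Fin n → ℝ}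
    {ν : Measure E} (hν : ν ∈ momentSet f c) (s : Finset E) (hs : ν (↑s)ᶜ = 0) :
    ∑ x ∈ s, ν.real {x} • momentVector f x = Fin.snoc c 1 := by
  obtain ⟨hprob, hc⟩ := hν
  ext k
  simp only [Finset.sum_apply, Pi.smul_apply, smul_eq_mul]
  induction k using Fin.lastCases with
  | last => simpa [momentVector] using (integral_eq_sum_of_compl_finset_null s hs 1).symm
  | cast i =>
    simpa [momentVector, hc i] using (integral_eq_sum_of_compl_finset_null s hs (f i)).symm

theorem isExtremeMeasure_of_linearIndependent {n : ℕ} {f : Fin n → E → ℝ} {c : Fin n → ℝ}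
    {μ : Measure E} (s : Finset E) (hs : μ (↑s)ᶜ = 0)
    (hli : LinearIndependent ℝ fun x : s => momentVector f x) :
    IsExtremeMeasure (momentSet f c) μ := by
  intro μ₁ h₁ μ₂ h₂ α hα₀ hα₁ hμ
  obtain ⟨hs₁, hs₂⟩ := measure_eq_zero_of_eq_smul_add_smul hα₀ hα₁ hμ hs
  have := h₁.1
  have := h₂.1
  have hweights : ∀ x : s, μ₁.real {x.1} = μ₂.real {x.1} := by
    refine Fintype.linearIndependent_iffₛ.1 hli _ _ ?_
    rw [Finset.sum_coe_sort s fun x => μ₁.real {x} • momentVector f x,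
      Finset.sum_coe_sort s fun x => μ₂.real {x} • momentVector f x,
      sum_measureReal_smul_momentVector h₁ s hs₁, sum_measureReal_smul_momentVector h₂ s hs₂]
  exact Measure.ext_of_compl_finset_null s hs₁ hs₂ fun x hx =>
    (measureReal_eq_measureReal_iff).1 (hweights ⟨x, hx⟩)

end Atomic

section Perturbation

variable {f : ι → E → ℝ} {c : ι → ℝ} {μ : Measure E} [IsProbabilityMeasure μ]

theorem withDensity_one_add_mem_momentSet (hf : ∀ i, Integrable (f i) μ)
    (hμ : ∀ i, ∫ x, f i x ∂μ = c i) {g : E → ℝ} (hg : Measurable g) (hg₁ : ∀ x, |g x| ≤ 1)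
    (hg₀ : ∫ x, g x ∂μ = 0) (hgf : ∀ i, ∫ x, g x * f i x ∂μ = 0) :
    μ.withDensity (fun x => ENNReal.ofReal (1 + g x)) ∈ momentSet f c := by
  have hpos : ∀ x, 0 ≤ 1 + g x := fun x => by linarith [(abs_le.1 (hg₁ x)).1]
  have hgi : Integrable g μ :=
    .of_bound hg.aestronglyMeasurable 1 (ae_of_all _ fun x => by simpa using hg₁ x)
  have hgi₁ : Integrable (fun x => 1 + g x) μ := (integrable_const 1).add hgi
  refine ⟨⟨?_⟩, fun i => ?_⟩
  · rw [withDensity_apply _ MeasurableSet.univ, Measure.restrict_univ,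
      ← ofReal_integral_eq_lintegral_ofReal hgi₁ (ae_of_all _ hpos),
      integral_add (integrable_const 1) hgi, hg₀]
    simp
  · have hgfi : Integrable (fun x => g x * f i x) μ :=
      (hf i).bdd_mul hg.aestronglyMeasurable (ae_of_all _ fun x => by simpa using hg₁ x)
    rw [integral_withDensity_eq_integral_toReal_smul (by fun_prop)
      (ae_of_all _ fun _ => ENNReal.ofReal_lt_top)]
    simp only [ENNReal.toReal_ofReal (hpos _), smul_eq_mul, add_mul, one_mul]
    rw [integral_add (hf i) hgfi, hμ i, hgf i, add_zero]

theorem IsExtremeMeasure.ae_eq_zero (hext : IsExtremeMeasure (momentSet f c) μ)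
    (hf : ∀ i, Integrable (f i) μ) (hμ : ∀ i, ∫ x, f i x ∂μ = c i) {g : E → ℝ}
    (hg : Measurable g) (hg₁ : ∀ x, |g x| ≤ 1) (hg₀ : ∫ x, g x ∂μ = 0)
    (hgf : ∀ i, ∫ x, g x * f i x ∂μ = 0) : g =ᵐ[μ] 0 := by
  have hpos : ∀ x, 0 ≤ 1 + g x := fun x => by linarith [(abs_le.1 (hg₁ x)).1]
  have hneg : ∀ x, 0 ≤ 1 + -g x := fun x => by linarith [(abs_le.1 (hg₁ x)).2]
  have hhalf : μ = ENNReal.ofReal (1 / 2) • μ.withDensity (fun x => ENNReal.ofReal (1 + g x))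
      + ENNReal.ofReal (1 - 1 / 2) • μ.withDensity (fun x => ENNReal.ofReal (1 + -g x)) := by
    rw [← withDensity_smul _ (by fun_prop), ← withDensity_smul _ (by fun_prop),
      ← withDensity_add_left (by fun_prop)]
    conv_lhs => rw [← withDensity_one (μ := μ)]
    congr 1
    funext x
    simp only [Pi.add_apply, Pi.smul_apply, smul_eq_mul, Pi.one_apply]
    rw [← ENNReal.ofReal_mul (by norm_num), ← ENNReal.ofReal_mul (by norm_num),
      ← ENNReal.ofReal_add (mul_nonneg (by norm_num) (hpos x)) (mul_nonneg (by norm_num) (hneg x)),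
      show (1 : ℝ) / 2 * (1 + g x) + (1 - 1 / 2) * (1 + -g x) = 1 by ring, ENNReal.ofReal_one]
  have heq := hext _ (withDensity_one_add_mem_momentSet hf hμ hg hg₁ hg₀ hgf)
    _ (withDensity_one_add_mem_momentSet (g := fun x => -g x) hf hμ hg.neg (by simpa using hg₁)
      (by simp [integral_neg, hg₀]) (by simp [neg_mul, integral_neg, hgf]))
    (1 / 2) (by norm_num) (by norm_num) hhalf
  have hgi : Integrable g μ :=
    .of_bound hg.aestronglyMeasurable 1 (ae_of_all _ fun x => by simpa using hg₁ x)
  have hgi₁ : Integrable (fun x => 1 + g x) μ := (integrable_const 1).add hgi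
  rw [withDensity_eq_iff (by fun_prop) (by fun_prop) hgi₁.lintegral_lt_top.ne] at heq
  filter_upwards [heq] with x hx
  rw [ENNReal.ofReal_eq_ofReal_iff (hpos x) (hneg x)] at hx
  simp only [Pi.zero_apply]
  linarith

end Perturbation

section ExtremePoints

variable {n : ℕ} {f : Fin n → E → ℝ} {c : Fin n → ℝ} {μ : Measure E} [IsProbabilityMeasure μ]

theorem IsExtremeMeasure.linearIndependent_setIntegral_momentVector
    (hext : IsExtremeMeasure (momentSet f c) μ) (hf : ∀ i, Integrable (f i) μ)
    (hμ : ∀ i, ∫ x, f i x ∂μ = c i) {κ : Type*} [Fintype κ] (A : κ → Set E)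
    (hA : ∀ j, MeasurableSet (A j)) (hdisj : Pairwise (Disjoint on A)) (hpos : ∀ j, μ (A j) ≠ 0) :
    LinearIndependent ℝ fun j k => ∫ x in A j, momentVector f x k ∂μ := by
  rw [Fintype.linearIndependent_iff]
  intro b hb j₀
  set M : ℝ := ∑ j, |b j| + 1
  have hM : 0 < M := by positivity
  set g : E → ℝ := fun x => ∑ j, (A j).indicator (fun _ => b j / M) x
  have hgA : ∀ j, ∀ x ∈ A j, g x = b j / M := by
    intro j x hx
    simp only [g]
    rw [Finset.sum_eq_single_of_mem j (Finset.mem_univ j) fun k _ hkj => indicator_of_notMem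
      (disjoint_left.1 (hdisj hkj.symm) hx) _, indicator_of_mem hx]
  have hg₁ : ∀ x, |g x| ≤ 1 := by
    intro x
    calc |g x| ≤ ∑ j, |(A j).indicator (fun _ => b j / M) x| := Finset.abs_sum_le_sum_abs _ _
      _ ≤ ∑ j, |b j| / M := Finset.sum_le_sum fun j _ => by
          by_cases hx : x ∈ A j <;> simp [hx, abs_div, abs_of_pos hM]; positivity
      _ ≤ 1 := by
          rw [← Finset.sum_div, div_le_one hM]
          linarith
  have hmom : ∀ k, ∫ x, g x * momentVector f x k ∂μ = 0 := by
    intro k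
    calc ∫ x, g x * momentVector f x k ∂μ
        = ∫ x, ∑ j, (A j).indicator (fun y => b j / M * momentVector f y k) x ∂μ := by
          simp only [g, Finset.sum_mul, indicator_mul_left]
      _ = M⁻¹ * ∑ j, b j * ∫ x in A j, momentVector f x k ∂μ := by
          rw [integral_finsetSum _ fun j _ =>
            ((integrable_momentVector hf k).const_mul _).indicator (hA j), Finset.mul_sum]
          simp only [integral_indicator (hA _), integral_const_mul, div_eq_inv_mul, mul_assoc]
      _ = 0 := by
          have hbk : ∑ j, b j * ∫ x in A j, momentVector f x k ∂μ = 0 := by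
            simpa using congrFun hb k
          rw [hbk, mul_zero]
  have hg₀ := hext.ae_eq_zero hf hμ
    (Finset.measurable_sum _ fun j _ => measurable_const.indicator (hA j)) hg₁
    (by simpa [momentVector] using hmom (Fin.last n))
    (fun i => by simpa [momentVector] using hmom i.castSucc)
  by_contra hb₀
  refine hpos j₀ (measure_mono_null (fun x hx => ?_) (ae_iff.1 hg₀))
  show g x ≠ 0
  rw [hgA j₀ x hx]
  exact div_ne_zero hb₀ hM.ne'

theorem IsExtremeMeasure.card_le_of_pairwise_disjoint
    (hext : IsExtremeMeasure (momentSet f c) μ) (hf : ∀ i, Integrable (f i) μ)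
    (hμ : ∀ i, ∫ x, f i x ∂μ = c i) {κ : Type*} [Fintype κ] (A : κ → Set E)
    (hA : ∀ j, MeasurableSet (A j)) (hdisj : Pairwise (Disjoint on A)) (hpos : ∀ j, μ (A j) ≠ 0) :
    Fintype.card κ ≤ n + 1 := by
  simpa using (hext.linearIndependent_setIntegral_momentVector hf hμ A hA hdisj
    hpos).fintype_card_le_finrank

variable [TopologicalSpace E] [T2Space E] [OpensMeasurableSpace E]

theorem IsExtremeMeasure.finite_support (hext : IsExtremeMeasure (momentSet f c) μ)
    (hf : ∀ i, Integrable (f i) μ) (hμ : ∀ i, ∫ x, f i x ∂μ = c i) : μ.support.Finite := by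
  by_contra hinf
  obtain ⟨t, hts, htcard⟩ := Set.Infinite.exists_subset_card_eq hinf (n + 2)
  obtain ⟨U, hU, hdisj⟩ := t.finite_toSet.t2_separation
  have := hext.card_le_of_pairwise_disjoint hf hμ (fun x : t => U x)
    (fun x => (hU x).2.measurableSet) (fun x y hxy => hdisj x.2 y.2 (Subtype.coe_ne_coe.2 hxy))
    (fun x => ((Measure.mem_support_iff_forall _).1 (hts x.2) _
      ((hU x).2.mem_nhds (hU x).1)).ne')
  simp [htcard] at this

theorem IsExtremeMeasure.exists_finset_linearIndependent_momentVector
    [HereditarilyLindelofSpace E] (hext : IsExtremeMeasure (momentSet f c) μ)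
    (hf : ∀ i, Integrable (f i) μ) (hμ : ∀ i, ∫ x, f i x ∂μ = c i) :
    ∃ s : Finset E, μ (↑s)ᶜ = 0 ∧ (∀ x ∈ s, μ {x} ≠ 0) ∧ s.card ≤ n + 1 ∧
      LinearIndependent ℝ fun x : s => momentVector f x := by
  set s := (hext.finite_support hf hμ).toFinset
  have hs : (s : Set E) = μ.support := Set.Finite.coe_toFinset _
  have hs₀ : μ (↑s)ᶜ = 0 := hs ▸ μ.measure_compl_support
  have hatom : ∀ x ∈ s, μ {x} ≠ 0 := by
    intro x hx h₀
    have hV : ((↑s : Set E) \ {x})ᶜ ∈ 𝓝 x :=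
      s.finite_toSet.sdiff.isClosed.isOpen_compl.mem_nhds (by simp)
    refine ((Measure.mem_support_iff_forall x).1 (hs ▸ hx) _ hV).ne'
      (measure_mono_null (t := {x} ∪ (↑s)ᶜ) ?_ (measure_union_null h₀ hs₀))
    intro y hy
    by_cases hyx : y = x <;> simp_all
  have hli : LinearIndependent ℝ fun x : s => momentVector f x := by
    have := hext.linearIndependent_setIntegral_momentVector hf hμ (fun x : s => {x.1})
      (fun _ => measurableSet_singleton _)
      (fun x y hxy => disjoint_singleton.2 (Subtype.coe_ne_coe.2 hxy)) (fun x => hatom x x.2)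
    have hw : ∀ x : s, μ.real {x.1} ≠ 0 := fun x =>
      ENNReal.toReal_ne_zero.2 ⟨hatom x x.2, measure_ne_top μ _⟩
    refine (LinearIndependent.units_smul_iff _ fun x : s => Units.mk0 _ (hw x)).1 ?_
    convert this using 1
    ext x k
    simp [measureReal_def]
  exact ⟨s, hs₀, hatom, by simpa using hli.fintype_card_le_finrank, hli⟩

end ExtremePoints

end MomentProblem

/-- Karr: for the set K of probability measures on a compact metric space E
with prescribed integrals ∫ fᵢ dμ = cᵢ, a measure μ ∈ K is extreme iff its support is a
finite set {x₁,…,x_k} of at most n+1 points such that the vectors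
(f₁(xᵢ),…,f_n(xᵢ),1) are linearly independent. -/
theorem stmt10 {E : Type*} [MetricSpace E] [CompactSpace E]
    [MeasurableSpace E] [BorelSpace E]
    {n : ℕ} (f : Fin n → E → ℝ) (hf : ∀ i, Continuous (f i)) (c : Fin n → ℝ)
    (μ : Measure E) [IsProbabilityMeasure μ] (hμ : ∀ i, (∫ x, f i x ∂μ) = c i) :
    (∀ μ₁ μ₂ : Measure E, IsProbabilityMeasure μ₁ → IsProbabilityMeasure μ₂ →
        (∀ i, (∫ x, f i x ∂μ₁) = c i) → (∀ i, (∫ x, f i x ∂μ₂) = c i) →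
        ∀ α : ℝ, 0 < α → α < 1 →
        μ = ENNReal.ofReal α • μ₁ + ENNReal.ofReal (1 - α) • μ₂ → μ₁ = μ₂)
    ↔ ∃ s : Finset E, μ (↑s : Set E)ᶜ = 0 ∧ (∀ x ∈ s, μ {x} ≠ 0) ∧ s.card ≤ n + 1 ∧
        LinearIndependent ℝ
          (fun x : ↥s => (Fin.snoc (fun i : Fin n => f i (x : E)) (1 : ℝ) : Fin (n+1) → ℝ)) := by
  refine (show _ ↔ IsExtremeMeasure (momentSet f c) μ from
    ⟨fun h μ₁ h₁ μ₂ h₂ => h μ₁ μ₂ h₁.1 h₂.1 h₁.2 h₂.2,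
      fun h μ₁ μ₂ p₁ p₂ c₁ c₂ => h μ₁ ⟨p₁, c₁⟩ μ₂ ⟨p₂, c₂⟩⟩).trans ⟨fun hext => ?_, ?_⟩
  · exact hext.exists_finset_linearIndependent_momentVector
      (fun i => (hf i).integrable_of_hasCompactSupport (.of_compactSpace _)) hμ
  · rintro ⟨s, hs, -, -, hli⟩
    exact isExtremeMeasure_of_linearIndependent s hs hli
end

section
/- If (μ₁,…,μ_N) is a step C-compatible tuple, i.e., Σ_k 𝔼(μ_k) = C and μ_k = α_k λ[l_k,p_k] + (1−α_k) λ[l_k,r_k] with (l⃗,r⃗) a C-compatible boundary, l_k ≤ p_k ≤ r_k and 0 < α_k < 1, then C ≤ Σ_k (l_k + r_k)/2; moreover if equality holds then p_k = r_k and μ_k = λ[l_k,r_k] for all k. -/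
open MeasureTheory

/-- A pair of N-tuples (l, r) is a C-compatible boundary if 0 ≤ r_k − l_k ≤ C − Σᵢ lᵢ. -/
def CompatBoundary {N : ℕ} (C : ℝ) (l r : Fin N → ℝ) : Prop :=
  ∀ k, 0 ≤ r k - l k ∧ r k - l k ≤ C - ∑ i, l i

/-- The tuple μ belongs to V^N[C]: Σ 𝔼(μ_k) = C and μ_k ∈ D[l_k,r_k] for some C-compatible
boundary (l,r). -/
def memV {N : ℕ} (C : ℝ) (μ : Fin N → MeasureTheory.Measure ℝ) : Prop :=
  (∑ k, ∫ x, x ∂(μ k)) = C ∧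
  ∃ l r : Fin N → ℝ, CompatBoundary C l r ∧ ∀ k, memD (l k) (r k) (μ k)

/-!
`λ[l,t]` has mean `(l + t)/2`, so the mean of
`μ_k = α_k λ[l_k,p_k] + (1 − α_k) λ[l_k,r_k]` is
`α_k (l_k + p_k)/2 + (1 − α_k)(l_k + r_k)/2`, which is at most `(l_k + r_k)/2` because
`p_k ≤ r_k`, with equality only if `p_k = r_k` because `α_k > 0`. Summing over `k` gives the
inequality; equality of the sums forces equality in every term.
-/

lemma integrable_id_lam (l t : ℝ) : Integrable (fun x : ℝ => x) (lam l t) := by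
  unfold lam
  split_ifs with h
  · refine Integrable.smul_measure ?_
      (ENNReal.inv_ne_top.mpr (ENNReal.ofReal_pos.mpr (sub_pos.mpr h)).ne')
    exact continuous_id.integrableOn_Icc
  · exact (integrable_const l).congr (ae_eq_dirac (fun x : ℝ => x)).symm

lemma integral_id_lam {l t : ℝ} (h : l ≤ t) : ∫ x, x ∂(lam l t) = (l + t) / 2 := by
  unfold lam
  split_ifs with hlt
  · have hIcc : ∫ x in Set.Icc l t, x = (t ^ 2 - l ^ 2) / 2 := by
      rw [integral_Icc_eq_integral_Ioc, ← intervalIntegral.integral_of_le h, integral_id]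
    rw [integral_smul_measure, hIcc, ENNReal.toReal_inv,
      ENNReal.toReal_ofReal (sub_pos.mpr hlt).le, smul_eq_mul]
    field_simp [(sub_pos.mpr hlt).ne']
    ring
  · rw [integral_dirac, le_antisymm h (not_lt.mp hlt)]
    ring

lemma integral_ofReal_smul_add_ofReal_smul {X E : Type*} [MeasurableSpace X]
    [NormedAddCommGroup E] [NormedSpace ℝ E] {f : X → E} {μ ν : Measure X}
    (hμ : Integrable f μ) (hν : Integrable f ν) {a b : ℝ} (ha : 0 ≤ a) (hb : 0 ≤ b) :
    ∫ x, f x ∂(ENNReal.ofReal a • μ + ENNReal.ofReal b • ν)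
      = a • ∫ x, f x ∂μ + b • ∫ x, f x ∂ν := by
  rw [integral_add_measure (hμ.smul_measure ENNReal.ofReal_ne_top)
      (hν.smul_measure ENNReal.ofReal_ne_top), integral_smul_measure, integral_smul_measure,
    ENNReal.toReal_ofReal ha, ENNReal.toReal_ofReal hb]

lemma ofReal_smul_add_ofReal_one_sub_smul {X : Type*} [MeasurableSpace X] {a : ℝ}
    (ha₀ : 0 ≤ a) (ha₁ : a ≤ 1) (ν : Measure X) :
    ENNReal.ofReal a • ν + ENNReal.ofReal (1 - a) • ν = ν := by
  rw [← add_smul, ← ENNReal.ofReal_add ha₀ (sub_nonneg.mpr ha₁), add_sub_cancel,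
    ENNReal.ofReal_one, one_smul]

lemma integral_id_step {a l p r : ℝ} (ha₀ : 0 ≤ a) (ha₁ : a ≤ 1) (hlp : l ≤ p)
    (hpr : p ≤ r) :
    ∫ x, x ∂(ENNReal.ofReal a • lam l p + ENNReal.ofReal (1 - a) • lam l r)
      = a * ((l + p) / 2) + (1 - a) * ((l + r) / 2) := by
  rw [integral_ofReal_smul_add_ofReal_smul (integrable_id_lam l p) (integrable_id_lam l r) ha₀
    (sub_nonneg.mpr ha₁), integral_id_lam hlp, integral_id_lam (hlp.trans hpr), smul_eq_mul,
    smul_eq_mul]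

lemma integral_id_step_le {a l p r : ℝ} (ha₀ : 0 ≤ a) (ha₁ : a ≤ 1) (hlp : l ≤ p)
    (hpr : p ≤ r) :
    ∫ x, x ∂(ENNReal.ofReal a • lam l p + ENNReal.ofReal (1 - a) • lam l r)
      ≤ (l + r) / 2 := by
  rw [integral_id_step ha₀ ha₁ hlp hpr]
  nlinarith

lemma eq_of_integral_id_step_eq {a l p r : ℝ} (ha₀ : 0 < a) (ha₁ : a ≤ 1) (hlp : l ≤ p)
    (hpr : p ≤ r)
    (h : ∫ x, x ∂(ENNReal.ofReal a • lam l p + ENNReal.ofReal (1 - a) • lam l r)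
      = (l + r) / 2) :
    p = r := by
  rw [integral_id_step ha₀.le ha₁ hlp hpr] at h
  have : a * (r - p) = 0 := by linarith
  linarith [(mul_eq_zero.mp this).resolve_left ha₀.ne']

theorem stmt13_general {N : ℕ} (C : ℝ) (l r p α : Fin N → ℝ) (μ : Fin N → Measure ℝ)
    (hp : ∀ k, l k ≤ p k ∧ p k ≤ r k) (hα : ∀ k, 0 < α k ∧ α k < 1)
    (hμ : ∀ k, μ k = ENNReal.ofReal (α k) • lam (l k) (p k)
                    + ENNReal.ofReal (1 - α k) • lam (l k) (r k))
    (hE : (∑ k, ∫ x, x ∂(μ k)) = C) :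
    C ≤ ∑ k, (l k + r k) / 2 ∧
      (C = ∑ k, (l k + r k) / 2 → ∀ k, p k = r k ∧ μ k = lam (l k) (r k)) := by
  have hle : ∀ k ∈ Finset.univ, ∫ x, x ∂(μ k) ≤ (l k + r k) / 2 := fun k _ => by
    rw [hμ k]
    exact integral_id_step_le (hα k).1.le (hα k).2.le (hp k).1 (hp k).2
  have hC : C ≤ ∑ k, (l k + r k) / 2 := hE ▸ Finset.sum_le_sum hle
  refine ⟨hC, fun hCeq k => ?_⟩
  have hmean : ∫ x, x ∂(μ k) = (l k + r k) / 2 :=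
    (Finset.sum_eq_sum_iff_of_le hle).mp (hE.trans hCeq) k (Finset.mem_univ k)
  rw [hμ k] at hmean ⊢
  have hpr : p k = r k :=
    eq_of_integral_id_step_eq (hα k).1 (hα k).2.le (hp k).1 (hp k).2 hmean
  exact ⟨hpr, hpr ▸ ofReal_smul_add_ofReal_one_sub_smul (hα k).1.le (hα k).2.le _⟩

/-- a step C-compatible tuple satisfies C ≤ Σ (l_k+r_k)/2, and if equality
holds then p_k = r_k and μ_k = λ[l_k,r_k] for all k. -/
theorem stmt13 {N : ℕ} (C : ℝ) (l r p α : Fin N → ℝ) (μ : Fin N → Measure ℝ)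
    (hb : CompatBoundary C l r)
    (hp : ∀ k, l k ≤ p k ∧ p k ≤ r k) (hα : ∀ k, 0 < α k ∧ α k < 1)
    (hμ : ∀ k, μ k = ENNReal.ofReal (α k) • lam (l k) (p k)
                    + ENNReal.ofReal (1 - α k) • lam (l k) (r k))
    (hE : (∑ k, ∫ x, x ∂(μ k)) = C) :
    C ≤ ∑ k, (l k + r k) / 2 ∧
      (C = ∑ k, (l k + r k) / 2 → ∀ k, p k = r k ∧ μ k = lam (l k) (r k)) :=
  stmt13_general C l r p α μ hp hα hμ hE
end

section
/- Let (l⃗,r⃗) be a C-compatible boundary with r_k − l_k < C − (l₁+⋯+l_N) for all k ≤ N−1, and suppose r₁+⋯+r_{N−1}+l_N > C > Σ_{k≤N−1}(l_k+r_k)/2 + l_N. Then there exist real numbers ξ₁,…,ξ_{N−1} with: 0 ≤ ξ_k ≤ r_k − l_k for all k; ξ_k > 0 whenever l_k < r_k; 2ξ_k ≤ ξ₁+⋯+ξ_{N−1} for all k; and r₁+⋯+r_{N−1}+l_N < C + (ξ₁+⋯+ξ_{N−1})/2. -/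
/-- existence of the auxiliary tuple ξ₁,…,ξ_{N−1}. Here the boundary is the
(n+1)-tuple (l₁,…,l_n,l_N), (r₁,…,r_n,r_N) with n = N−1. -/
theorem stmt15 {n : ℕ} (C : ℝ) (l r : Fin n → ℝ) (lN rN : ℝ)
    (hb : CompatBoundary C (Fin.snoc l lN) (Fin.snoc r rN))
    (hstrict : ∀ k : Fin n, r k - l k < C - (∑ i, l i + lN))
    (h1 : (∑ i, r i) + lN > C)
    (h2 : C > (∑ k, (l k + r k) / 2) + lN) :
    ∃ ξ : Fin n → ℝ,
      (∀ k, 0 ≤ ξ k ∧ ξ k ≤ r k - l k) ∧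
      (∀ k, l k < r k → 0 < ξ k) ∧
      (∀ k, 2 * ξ k ≤ ∑ i, ξ i) ∧
      (∑ i, r i) + lN < C + (∑ i, ξ i) / 2 := by
  set d : Fin n → ℝ := fun k => r k - l k with hd
  set S : ℝ := ∑ i, d i with hS
  set D : ℝ := C - (∑ i, l i + lN) with hD
  have hd0 : ∀ k, 0 ≤ d k := by
    intro k
    have := (hb k.castSucc).1
    show 0 ≤ r k - l k
    simpa [Fin.snoc_castSucc] using this
  have hdD : ∀ k, d k < D := fun k => hstrict k
  have hSsplit : S = (∑ i, r i) - ∑ i, l i := by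
    simp [hS, hd, Finset.sum_sub_distrib]
  have hsum2 : (∑ k, (l k + r k) / 2) = ((∑ i, l i) + ∑ i, r i) / 2 := by
    rw [← Finset.sum_add_distrib, Finset.sum_div]
  have hSD : D < S := by rw [hSsplit, hD]; linarith
  have hS2D : S < 2 * D := by
    rw [hSsplit, hD]
    rw [hsum2] at h2
    linarith
  by_cases hA : ∀ k, 2 * d k ≤ S
  · refine ⟨d, fun k => ⟨hd0 k, le_refl _⟩, fun k hk => by simp [hd]; linarith, hA, ?_⟩
    linarith [hS, hSsplit, hS2D, hD]
  · push_neg at hA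
    obtain ⟨j, hj⟩ := hA
    set ξ : Fin n → ℝ := Function.update d j (S - d j) with hξ
    have herase : ∑ i ∈ Finset.univ.erase j, d i = S - d j := by
      rw [Finset.sum_erase_eq_sub (Finset.mem_univ j), hS]
    have hT : ∑ i, ξ i = 2 * (S - d j) := by
      rw [hξ, Finset.sum_update_of_mem (Finset.mem_univ j), ← Finset.erase_eq, herase]
      ring
    have hkle : ∀ k, k ≠ j → d k ≤ S - d j := by
      intro k hk
      rw [← herase]
      exact Finset.single_le_sum (fun i _ => hd0 i) (Finset.mem_erase.mpr ⟨hk, Finset.mem_univ k⟩)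
    refine ⟨ξ, ?_, ?_, ?_, ?_⟩
    · intro k
      by_cases hkj : k = j
      · subst hkj
        simp only [hξ, Function.update_self]
        constructor
        · linarith [hdD k]
        · show S - d k ≤ r k - l k
          have : d k = r k - l k := rfl
          linarith
      · simp only [hξ, Function.update_of_ne hkj]
        exact ⟨hd0 k, le_refl _⟩
    · intro k hk
      by_cases hkj : k = j
      · subst hkj
        simp only [hξ, Function.update_self]
        linarith [hdD k]
      · simp only [hξ, Function.update_of_ne hkj]
        show 0 < r k - l k
        linarith
    · intro k
      rw [hT]
      by_cases hkj : k = j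
      · subst hkj; simp only [hξ, Function.update_self]; linarith
      · simp only [hξ, Function.update_of_ne hkj]
        linarith [hkle k hkj]
    · rw [hT]
      have h3 := hdD j
      clear_value S D d ξ
      linarith
end

section
/- Let K be a closed segment in ℝ and C ∈ ℝ. The set F^N(K;C) of N-tuples of probability measures on K admitting a coupling concentrated on the hyperplane {x₁+⋯+x_N = C} is a compact convex subset of the N-fold product of the space of signed measures on K with the weak topology, and its extreme points are exactly the tuples (δ_{t₁},…,δ_{t_N}) with t_k ∈ K for all k and t₁+⋯+t_N = C. -/
/-!
The tuples in `F^N(K;C)` are exactly the marginals of probability measures carried by the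
compact slice `K^N ∩ {x₁+⋯+x_N = C}`. Such measures form a compact set by Prokhorov's theorem
and taking marginals is weakly continuous, which gives compactness; mixing two couplings
gives convexity. If a marginal `μ_j` of a tuple in `F^N(K;C)` gives a set `A` mass strictly
between `0` and `1`, conditioning the coupling on `{x_j ∈ A}` and on its complement writes the
tuple as a proper convex combination of two tuples of `F^N(K;C)` that differ at `j`. So the
marginals of an extreme tuple are `0`–`1` measures on `ℝ`, i.e. Dirac masses, and their atoms
lie on the slice. Conversely, a Dirac mass is a convex combination of probability measures
only in the trivial way.
-/

open MeasureTheory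

/-- membership in F^N(K;C) for K = [a,b]: the tuple admits a coupling supported on K^N and
concentrated on the hyperplane {x₁+⋯+x_N = C}. -/
def memF {N : ℕ} (a b C : ℝ) (μ : Fin N → Measure ℝ) : Prop :=
  ∃ γ : Measure (Fin N → ℝ), IsProbabilityMeasure γ ∧
    (∀ k, γ.map (fun x => x k) = μ k) ∧
    γ {x | ¬ ∀ k, x k ∈ Set.Icc a b} = 0 ∧
    γ {x | (∑ i, x i) ≠ C} = 0

open ProbabilityTheory Set
open scoped ENNReal

section Coupling

variable {ι X : Type*} [MeasurableSpace X]

def HasCouplingIn (S : Set (ι → X)) (μ : ι → Measure X) : Prop :=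
  ∃ γ : Measure (ι → X), IsProbabilityMeasure γ ∧ (∀ k, γ.map (fun x => x k) = μ k) ∧
    ∀ᵐ x ∂γ, x ∈ S

def IsExtremeTuple (P : (ι → Measure X) → Prop) (μ : ι → Measure X) : Prop :=
  P μ ∧ ∀ μ₁ μ₂, P μ₁ → P μ₂ → ∀ α : ℝ, 0 < α → α < 1 →
    (∀ k, μ k = ENNReal.ofReal α • μ₁ k + ENNReal.ofReal (1 - α) • μ₂ k) → μ₁ = μ₂

lemma smul_cond_add_smul_cond_compl {Ω : Type*} [MeasurableSpace Ω] (γ : Measure Ω)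
    [IsFiniteMeasure γ] {E : Set Ω} (hE : MeasurableSet E) :
    γ E • γ[|E] + γ Eᶜ • γ[|Eᶜ] = γ := by
  ext t
  simp [← cond_add_cond_compl_eq (t := t) hE γ, mul_comm]

lemma eq_dirac_of_dirac_eq_smul_add [MeasurableSingletonClass X] {x : X} {ν ρ : Measure X}
    [IsProbabilityMeasure ν] {c : ℝ≥0∞} (hc : c ≠ 0) (h : Measure.dirac x = c • ν + ρ) :
    ν = Measure.dirac x := by
  have hν : ν {x}ᶜ = 0 := by
    have hx := congrArg (· {x}ᶜ) h
    simp only [Measure.dirac_apply, Measure.add_apply, Measure.smul_apply, smul_eq_mul,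
      indicator_of_notMem (notMem_compl_iff.2 (mem_singleton x))] at hx
    exact (mul_eq_zero.1 (add_eq_zero.1 hx.symm).1).resolve_left hc
  rw [← Measure.restrict_eq_self_of_ae_mem (s := {x}) hν, Measure.restrict_singleton,
    (prob_compl_eq_zero_iff (measurableSet_singleton x)).1 hν, one_smul]

namespace HasCouplingIn

variable {S : Set (ι → X)} {μ ν : ι → Measure X}

lemma of_ae_mem {γ : Measure (ι → X)} [IsProbabilityMeasure γ] (h : ∀ᵐ x ∂γ, x ∈ S) :
    HasCouplingIn S (fun k => γ.map (fun x => x k)) :=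
  ⟨γ, ‹_›, fun _ => rfl, h⟩

lemma isProbabilityMeasure (h : HasCouplingIn S μ) (k : ι) : IsProbabilityMeasure (μ k) := by
  obtain ⟨γ, _, hmap, -⟩ := h
  rw [← hmap k]
  exact Measure.isProbabilityMeasure_map (measurable_pi_apply k).aemeasurable

lemma smul_add_smul (hμ : HasCouplingIn S μ) (hν : HasCouplingIn S ν) {p q : ℝ≥0∞}
    (hpq : p + q = 1) : HasCouplingIn S (fun k => p • μ k + q • ν k) := by
  obtain ⟨γ₁, _, hmap₁, hS₁⟩ := hμ
  obtain ⟨γ₂, _, hmap₂, hS₂⟩ := hν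
  refine ⟨p • γ₁ + q • γ₂, ⟨by simp [hpq]⟩, fun k => ?_, ?_⟩
  · rw [Measure.map_add _ _ (measurable_pi_apply k), Measure.map_smul, Measure.map_smul,
      hmap₁, hmap₂]
  · exact ae_add_measure_iff.2 ⟨Measure.ae_smul_measure hS₁ p, Measure.ae_smul_measure hS₂ q⟩

lemma of_dirac [Countable ι] [MeasurableSingletonClass X] {t : ι → X} (ht : t ∈ S) :
    HasCouplingIn S (fun k => Measure.dirac (t k)) := by
  simpa only [Measure.map_dirac' (measurable_pi_apply _)] using
    of_ae_mem (γ := Measure.dirac t) (by rw [ae_dirac_eq]; exact ht)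

lemma mem_of_dirac [Countable ι] [MeasurableSingletonClass X] {t : ι → X}
    (h : HasCouplingIn S (fun k => Measure.dirac (t k))) : t ∈ S := by
  obtain ⟨γ, _, hmap, hS⟩ := h
  have hγt : ∀ᵐ x ∂γ, t = x := by
    have hk : ∀ k, ∀ᵐ x ∂γ, t k = x k := fun k =>
      ae_of_ae_map (measurable_pi_apply k).aemeasurable
        (by rw [hmap k, ae_dirac_eq]; exact Filter.eventually_pure.2 rfl)
    filter_upwards [ae_all_iff.2 hk] with x hx using funext hx
  obtain ⟨x, rfl, hx⟩ := (hγt.and hS).exists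
  exact hx

end HasCouplingIn

lemma IsExtremeTuple.isZeroOneMeasure {S : Set (ι → X)} {μ : ι → Measure X}
    (h : IsExtremeTuple (HasCouplingIn S) μ) (j : ι) :
    IsZeroOneMeasure (μ j) := by
  refine ⟨fun A hA => ?_⟩
  obtain ⟨⟨γ, _, hmap, hS⟩, hext⟩ := h
  set E := (fun x : ι → X => x j) ⁻¹' A
  have hE : MeasurableSet E := measurable_pi_apply j hA
  have hγE : γ E = μ j A := by rw [← hmap j, Measure.map_apply (measurable_pi_apply j) hA]
  rw [← hγE]
  by_contra! hγE01
  have hγEc : γ Eᶜ ≠ 0 := by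
    rw [prob_compl_eq_one_sub hE, Ne, tsub_eq_zero_iff_le, not_le]
    exact prob_le_one.lt_of_ne hγE01.2
  have := cond_isProbabilityMeasure (μ := γ) hγE01.1
  have := cond_isProbabilityMeasure (μ := γ) hγEc
  set α := (γ E).toReal
  have hα : ENNReal.ofReal α = γ E := ENNReal.ofReal_toReal (measure_ne_top _ _)
  have hα' : ENNReal.ofReal (1 - α) = γ Eᶜ := by
    rw [ENNReal.ofReal_sub _ ENNReal.toReal_nonneg, ENNReal.ofReal_one, hα,
      prob_compl_eq_one_sub hE]
  have hsplit := hext _ _ (.of_ae_mem (cond_absolutelyContinuous.ae_le hS))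
    (.of_ae_mem (cond_absolutelyContinuous.ae_le hS)) α
    (ENNReal.toReal_pos hγE01.1 (measure_ne_top _ _))
    (by rw [← ENNReal.ofReal_lt_one, hα]; exact prob_le_one.lt_of_ne hγE01.2) fun k => by
      rw [hα, hα', ← Measure.map_smul, ← Measure.map_smul,
        ← Measure.map_add _ _ (measurable_pi_apply k), smul_cond_add_smul_cond_compl γ hE,
        hmap k]
  have hsplitA : (γ[|E]).map (fun x => x j) A = (γ[|Eᶜ]).map (fun x => x j) A :=
    congrArg (fun ν => ν j A) hsplit
  rw [Measure.map_apply (measurable_pi_apply j) hA, Measure.map_apply (measurable_pi_apply j) hA,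
    cond_apply_self hγE01.1 (measure_ne_top _ _), cond_apply hE.compl, compl_inter_self,
    measure_empty, mul_zero] at hsplitA
  exact one_ne_zero hsplitA

theorem isExtremeTuple_hasCouplingIn_iff [Countable ι] [StandardBorelSpace X]
    {S : Set (ι → X)} {μ : ι → Measure X} :
    IsExtremeTuple (HasCouplingIn S) μ ↔ ∃ t ∈ S, ∀ k, μ k = Measure.dirac (t k) := by
  constructor
  · intro h
    have := h.1.isProbabilityMeasure
    choose t ht using fun k => (h.isZeroOneMeasure k).exists_eq_dirac
    refine ⟨t, HasCouplingIn.mem_of_dirac ?_, ht⟩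
    simpa only [← funext ht] using h.1
  · rintro ⟨t, htS, ht⟩
    obtain rfl : μ = fun k => Measure.dirac (t k) := funext ht
    refine ⟨.of_dirac htS, fun μ₁ μ₂ h₁ h₂ α hα0 hα1 hμ => funext fun k => ?_⟩
    have := h₁.isProbabilityMeasure k
    have := h₂.isProbabilityMeasure k
    rw [eq_dirac_of_dirac_eq_smul_add (by simpa using hα0) (hμ k),
      eq_dirac_of_dirac_eq_smul_add (by simpa using hα1) ((hμ k).trans (add_comm _ _))]

theorem isCompact_setOf_hasCouplingIn [TopologicalSpace X] [T2Space X] [BorelSpace X]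
    [SecondCountableTopology X] [Countable ι] {S : Set (ι → X)} (hS : IsCompact S) :
    IsCompact {μ : ι → ProbabilityMeasure X | HasCouplingIn S (fun k => μ k)} := by
  have hγ : IsCompact {γ : ProbabilityMeasure (ι → X) | ∀ _ : ℕ, γ Sᶜ ≤ 0} :=
    isCompact_setOfPred_probabilityMeasure_mass_eq_compl_isCompact_le tendsto_const_nhds
      (fun _ => hS) (Or.inr monotone_const)
  convert hγ.image (f := fun γ k => γ.map (measurable_pi_apply k).aemeasurable)
    (continuous_pi fun k => ProbabilityMeasure.continuous_map (continuous_apply k))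
  ext μ
  simp only [mem_ofPred_eq, mem_image, nonpos_iff_eq_zero, forall_const,
    ProbabilityMeasure.null_iff_toMeasure_null]
  constructor
  · rintro ⟨γ, hγ, hmap, hS⟩
    exact ⟨⟨γ, hγ⟩, hS, funext fun k => ProbabilityMeasure.toMeasure_injective
      ((ProbabilityMeasure.toMeasure_map _ _).trans (hmap k))⟩
  · rintro ⟨γ, hS, rfl⟩
    exact ⟨γ, inferInstance, fun k => (ProbabilityMeasure.toMeasure_map _ _).symm, hS⟩

end Coupling

def cubeSlice {N : ℕ} (a b C : ℝ) : Set (Fin N → ℝ) :=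
  univ.pi (fun _ => Icc a b) ∩ {x | ∑ i, x i = C}

lemma isCompact_cubeSlice {N : ℕ} (a b C : ℝ) : IsCompact (cubeSlice (N := N) a b C) :=
  (isCompact_univ_pi fun _ => isCompact_Icc).inter_right
    (isClosed_eq (continuous_finsetSum _ fun i _ => continuous_apply i) continuous_const)

lemma memF_iff_hasCouplingIn {N : ℕ} {a b C : ℝ} {μ : Fin N → Measure ℝ} :
    memF a b C μ ↔ HasCouplingIn (cubeSlice a b C) μ := by
  have hslice : ∀ γ : Measure (Fin N → ℝ), (∀ᵐ x ∂γ, x ∈ cubeSlice a b C) ↔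
      γ {x | ¬ ∀ k, x k ∈ Icc a b} = 0 ∧ γ {x | ∑ i, x i ≠ C} = 0 := by
    intro γ
    rw [ae_iff, ← measure_union_null_iff]
    congr! 2
    ext x
    simp only [cubeSlice, mem_ofPred_eq, mem_union, mem_inter_iff, mem_pi, mem_univ,
      true_implies, not_and_or, ne_eq]
  simp only [memF, HasCouplingIn, hslice]

theorem stmt17_general {N : ℕ} (a b C : ℝ) :
    IsCompact {μ : Fin N → ProbabilityMeasure ℝ | memF a b C (fun k => (μ k).toMeasure)}
    ∧ (∀ μ ν : Fin N → Measure ℝ, memF a b C μ → memF a b C ν →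
        ∀ α : ℝ, 0 ≤ α → α ≤ 1 →
        memF a b C (fun k => ENNReal.ofReal α • μ k + ENNReal.ofReal (1 - α) • ν k))
    ∧ (∀ μ : Fin N → Measure ℝ, (∀ k, IsProbabilityMeasure (μ k)) →
        ((memF a b C μ ∧
            ∀ (μ₁ μ₂ : Fin N → Measure ℝ),
              memF a b C μ₁ → memF a b C μ₂ → ∀ α : ℝ, 0 < α → α < 1 →
              (∀ k, μ k = ENNReal.ofReal α • μ₁ k + ENNReal.ofReal (1 - α) • μ₂ k) →
              μ₁ = μ₂)
          ↔ ∃ t : Fin N → ℝ, (∀ k, t k ∈ Set.Icc a b) ∧ (∑ k, t k) = C ∧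
              ∀ k, μ k = Measure.dirac (t k))) := by
  have hF : memF (N := N) a b C = HasCouplingIn (cubeSlice a b C) :=
    funext fun _ => propext memF_iff_hasCouplingIn
  rw [hF]
  refine ⟨isCompact_setOf_hasCouplingIn (isCompact_cubeSlice a b C),
    fun μ ν hμ hν α h0 h1 => hμ.smul_add_smul hν ?_, fun μ _ => ?_⟩
  · rw [← ENNReal.ofReal_add h0 (sub_nonneg.2 h1), add_sub_cancel, ENNReal.ofReal_one]
  · refine isExtremeTuple_hasCouplingIn_iff.trans ?_
    simp only [cubeSlice, mem_inter_iff, mem_pi, mem_univ, true_implies, mem_ofPred_eq,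
      and_assoc]

/-- F^N(K;C) is compact and convex in the weak topology, and its extreme
points are exactly the tuples (δ_{t₁},…,δ_{t_N}) with t_k ∈ K and Σ t_k = C. -/
theorem stmt17 {N : ℕ} (a b C : ℝ) (hab : a ≤ b) :
    IsCompact {μ : Fin N → ProbabilityMeasure ℝ | memF a b C (fun k => (μ k).toMeasure)}
    ∧ (∀ μ ν : Fin N → Measure ℝ, memF a b C μ → memF a b C ν →
        ∀ α : ℝ, 0 ≤ α → α ≤ 1 →
        memF a b C (fun k => ENNReal.ofReal α • μ k + ENNReal.ofReal (1 - α) • ν k))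
    ∧ (∀ μ : Fin N → Measure ℝ, (∀ k, IsProbabilityMeasure (μ k)) →
        ((memF a b C μ ∧
            ∀ (μ₁ μ₂ : Fin N → Measure ℝ),
              memF a b C μ₁ → memF a b C μ₂ → ∀ α : ℝ, 0 < α → α < 1 →
              (∀ k, μ k = ENNReal.ofReal α • μ₁ k + ENNReal.ofReal (1 - α) • μ₂ k) →
              μ₁ = μ₂)
          ↔ ∃ t : Fin N → ℝ, (∀ k, t k ∈ Set.Icc a b) ∧ (∑ k, t k) = C ∧
              ∀ k, μ k = Measure.dirac (t k))) :=
  stmt17_general a b C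
end
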